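/- arXiv:2310.08424 — 16 statements merged into one kernel-verified Lean document; each statement's English description precedes it below -/
import Mathlib

section
/- Let n be a natural number and let Φ : ℝ₊₊ × ℝⁿ → ℝ₊₊ × ℝⁿ be the projective transformation Φ(ρ, x) = (1/ρ, x/ρ). Then for every subset S of ℝ₊₊ × ℝⁿ one has conv(S) = { (ρ, x) ∈ ℝ × ℝⁿ | ρ > 0 and (1, x) ∈ ρ · conv(Φ(S)) } and conv(Φ(S)) = { (σ, y) ∈ ℝ × ℝⁿ | σ > 0 and (1, y) ∈ σ · conv(S) }. -/
open Pointwise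

private noncomputable def projMap (n : ℕ) : ℝ × (Fin n → ℝ) → ℝ × (Fin n → ℝ) :=
  fun q => (q.1⁻¹, q.1⁻¹ • q.2)

private lemma projMap_invol (n : ℕ) (p : ℝ × (Fin n → ℝ)) (hp : 0 < p.1) :
    projMap n (projMap n p) = p := by
  ext
  · simp [projMap, inv_inv]
  · simp [projMap, inv_inv, mul_inv_cancel_left₀ hp.ne']

private lemma key (n : ℕ) (T : Set (ℝ × (Fin n → ℝ))) (hT : ∀ p ∈ T, 0 < p.1)
    (p : ℝ × (Fin n → ℝ)) (hp : p ∈ convexHull ℝ T) :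
    0 < p.1 ∧ projMap n p ∈ convexHull ℝ (projMap n '' T) := by
  have hpos : 0 < p.1 := by
    have hconv : Convex ℝ {q : ℝ × (Fin n → ℝ) | 0 < q.1} :=
      convex_halfSpace_gt (f := fun q : ℝ × (Fin n → ℝ) => q.1)
        ⟨fun _ _ => rfl, fun _ _ => by simp⟩ 0
    exact convexHull_min hT hconv hp
  refine ⟨hpos, ?_⟩
  rw [convexHull_eq] at hp
  obtain ⟨ι, t, w, z, hw, hw1, hz, hx⟩ := hp
  rw [Finset.centerMass_eq_of_sum_1 _ _ hw1] at hx
  have hzpos : ∀ i ∈ t, 0 < (z i).1 := fun i hi => hT _ (hz i hi)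
  have hfst : p.1 = ∑ i ∈ t, w i * (z i).1 := by
    rw [← hx, Prod.fst_sum]; simp [Prod.smul_fst]
  have hsnd : p.2 = ∑ i ∈ t, w i • (z i).2 := by
    rw [← hx, Prod.snd_sum]; simp [Prod.smul_snd]
  set w' : ι → ℝ := fun i => w i * (z i).1 * p.1⁻¹ with hw'def
  have hw'sum : ∑ i ∈ t, w' i = 1 := by
    simp only [hw'def]
    rw [← Finset.sum_mul, ← hfst, mul_inv_cancel₀ hpos.ne']
  have hw'nn : ∀ i ∈ t, 0 ≤ w' i := fun i hi =>
    mul_nonneg (mul_nonneg (hw i hi) (hzpos i hi).le) (inv_nonneg.2 hpos.le)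
  have hmem : ∀ i ∈ t, projMap n (z i) ∈ projMap n '' T := fun i hi => ⟨z i, hz i hi, rfl⟩
  have h := Finset.centerMass_mem_convexHull t hw'nn (by rw [hw'sum]; norm_num) hmem
  have hsimp : ∀ i ∈ t, w' i * (z i).1⁻¹ = w i * p.1⁻¹ := by
    intro i hi
    have := (hzpos i hi).ne'
    field_simp [hw'def]
    rw [hw'def]; dsimp only; rw [mul_assoc, inv_mul_cancel₀ hpos.ne', mul_one, mul_comm]
  have heq : t.centerMass w' (fun i => projMap n (z i)) = projMap n p := by
    rw [Finset.centerMass_eq_of_sum_1 _ _ hw'sum]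
    have h1 : (∑ i ∈ t, w' i • projMap n (z i)).1 = p.1⁻¹ := by
      rw [Prod.fst_sum]
      simp only [projMap, Prod.smul_mk, smul_eq_mul]
      rw [Finset.sum_congr rfl hsimp, ← Finset.sum_mul, hw1, one_mul]
    have h2 : (∑ i ∈ t, w' i • projMap n (z i)).2 = p.1⁻¹ • p.2 := by
      rw [Prod.snd_sum]
      simp only [projMap, Prod.smul_mk, smul_smul]
      rw [Finset.sum_congr rfl fun i hi => by rw [hsimp i hi]]
      rw [hsnd, Finset.smul_sum]
      exact Finset.sum_congr rfl fun i hi => by rw [mul_comm, mul_smul]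
    ext
    · rw [h1]; rfl
    · rw [h2]; rfl
  rw [heq] at h
  exact h

/-- Theorem 1 (projective transformation and convex hulls). -/
theorem stmt0 (n : ℕ) (S : Set (ℝ × (Fin n → ℝ)))
    (hS : ∀ p ∈ S, 0 < p.1)
    (Φ : ℝ × (Fin n → ℝ) → ℝ × (Fin n → ℝ))
    (hΦ : ∀ p : ℝ × (Fin n → ℝ), Φ p = (p.1⁻¹, p.1⁻¹ • p.2)) :
    convexHull ℝ S
      = {p : ℝ × (Fin n → ℝ) | 0 < p.1 ∧ ((1 : ℝ), p.2) ∈ p.1 • convexHull ℝ (Φ '' S)} ∧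
    convexHull ℝ (Φ '' S)
      = {q : ℝ × (Fin n → ℝ) | 0 < q.1 ∧ ((1 : ℝ), q.2) ∈ q.1 • convexHull ℝ S} := by
  have hΦ' : Φ = projMap n := funext fun p => by rw [hΦ]; rfl
  subst hΦ'
  have hS' : ∀ q ∈ projMap n '' S, 0 < q.1 := by
    rintro q ⟨p, hp, rfl⟩
    exact inv_pos.2 (hS p hp)
  have himg : projMap n '' (projMap n '' S) = S := by
    rw [Set.image_image]
    conv_rhs => rw [← Set.image_id S]
    exact Set.image_congr fun p hp => projMap_invol n p (hS p hp)
  have hmemiff : ∀ (p : ℝ × (Fin n → ℝ)) (A : Set (ℝ × (Fin n → ℝ))), 0 < p.1 →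
      (((1 : ℝ), p.2) ∈ p.1 • A ↔ projMap n p ∈ A) := by
    intro p A hp
    rw [Set.mem_smul_set_iff_inv_smul_mem₀ hp.ne']
    have : p.1⁻¹ • ((1 : ℝ), p.2) = projMap n p := by
      simp [projMap, Prod.smul_mk]
    rw [this]
  constructor
  · ext p
    simp only [Set.mem_setOf_eq]
    constructor
    · intro hp
      obtain ⟨h1, h2⟩ := key n S hS p hp
      exact ⟨h1, (hmemiff p _ h1).2 h2⟩
    · rintro ⟨h1, h2⟩
      have h2' := (hmemiff p _ h1).1 h2
      obtain ⟨_, h3⟩ := key n (projMap n '' S) hS' (projMap n p) h2'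
      rw [himg, projMap_invol n p h1] at h3
      exact h3
  · ext q
    simp only [Set.mem_setOf_eq]
    constructor
    · intro hq
      obtain ⟨h1, h2⟩ := key n (projMap n '' S) hS' q hq
      rw [himg] at h2
      exact ⟨h1, (hmemiff q _ h1).2 h2⟩
    · rintro ⟨h1, h2⟩
      have h2' := (hmemiff q _ h1).1 h2
      obtain ⟨_, h3⟩ := key n S hS (projMap n q) h2'
      rw [projMap_invol n q h1] at h3
      exact h3
end

section
/- Let X ⊆ ℝⁿ be nonempty, let f = (f₁, …, f_m) : X → ℝᵐ and α ∈ ℝᵐ, and suppose there exists ε > 0 such that ⟨α, f(x)⟩ > ε for all x ∈ X. Define F = { f(x) | x ∈ X } and G = { f(x)/⟨α, f(x)⟩ | x ∈ X }. If F is bounded, then conv(G) = { g ∈ ℝᵐ | there exists ρ > 0 with g ∈ ρ · conv(F) and ⟨α, g⟩ = 1 }. -/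
open Pointwise Matrix

/-- Dot product with a fixed vector, as a linear map. -/
noncomputable def dotLin (m : ℕ) (α : Fin m → ℝ) : (Fin m → ℝ) →ₗ[ℝ] ℝ where
  toFun v := α ⬝ᵥ v
  map_add' u v := dotProduct_add α u v
  map_smul' c v := by simp [dotProduct_smul, smul_eq_mul]

/-- Theorem 2, equation (11a): convex hull of the set of normalized fractions. -/
theorem stmt1 (n m : ℕ) (X : Set (Fin n → ℝ)) (hX : X.Nonempty)
    (f : (Fin n → ℝ) → (Fin m → ℝ)) (α : Fin m → ℝ)
    (hpos : ∃ ε > (0 : ℝ), ∀ x ∈ X, ε < α ⬝ᵥ f x)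
    (F G : Set (Fin m → ℝ))
    (hF : F = f '' X)
    (hG : G = (fun x => (α ⬝ᵥ f x)⁻¹ • f x) '' X)
    (hbdd : Bornology.IsBounded F) :
    convexHull ℝ G
      = {g : Fin m → ℝ | ∃ ρ > (0 : ℝ), g ∈ ρ • convexHull ℝ F ∧ α ⬝ᵥ g = 1} := by
  classical
  obtain ⟨ε, hε, hεlt⟩ := hpos
  subst hF hG
  set L := dotLin m α with hL
  have hLdef : ∀ v, L v = α ⬝ᵥ v := fun v => rfl
  apply Set.eq_of_subset_of_subset
  · -- conv G ⊆ RHS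
    apply convexHull_min
    · rintro g ⟨x, hx, rfl⟩
      have ht : (0 : ℝ) < α ⬝ᵥ f x := hε.trans (hεlt x hx)
      refine ⟨(α ⬝ᵥ f x)⁻¹, inv_pos.mpr ht, ⟨f x, subset_convexHull ℝ _ ⟨x, hx, rfl⟩, rfl⟩, ?_⟩
      simp [dotProduct_smul, smul_eq_mul, inv_mul_cancel₀ ht.ne']
    · rintro g₁ ⟨ρ₁, hρ₁, ⟨h₁, hh₁, rfl⟩, hα₁⟩ g₂ ⟨ρ₂, hρ₂, ⟨h₂, hh₂, rfl⟩, hα₂⟩ a b ha hb hab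
      dsimp only at hα₁ hα₂ ⊢
      have hρ : (0 : ℝ) < a * ρ₁ + b * ρ₂ := by
        rcases ha.lt_or_eq with ha' | ha'
        · exact add_pos_of_pos_of_nonneg (mul_pos ha' hρ₁) (mul_nonneg hb hρ₂.le)
        · have hb1 : b = 1 := by linarith
          simp [← ha', hb1, hρ₂]
      refine ⟨a * ρ₁ + b * ρ₂, hρ, ?_, ?_⟩
      · refine ⟨(a * ρ₁ / (a * ρ₁ + b * ρ₂)) • h₁ + (b * ρ₂ / (a * ρ₁ + b * ρ₂)) • h₂, ?_, ?_⟩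
        · exact (convex_convexHull ℝ _) hh₁ hh₂
            (by positivity) (by positivity)
            (by field_simp)
        · dsimp only
          rw [smul_add, smul_smul, smul_smul]
          rw [mul_div_cancel₀ _ hρ.ne', mul_div_cancel₀ _ hρ.ne']
          rw [smul_smul, smul_smul]
      · have : α ⬝ᵥ (a • ρ₁ • h₁ + b • ρ₂ • h₂)
            = a * (α ⬝ᵥ (ρ₁ • h₁)) + b * (α ⬝ᵥ (ρ₂ • h₂)) := by
          simp [dotProduct_add, dotProduct_smul, smul_eq_mul]
        rw [this, hα₁, hα₂]; linarith
  · -- RHS ⊆ conv G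
    rintro g ⟨ρ, hρ, ⟨h, hh, rfl⟩, hα⟩
    dsimp only at hα ⊢
    rw [convexHull_eq] at hh
    obtain ⟨ι, t, w, z, hw0, hw1, hz, hcm⟩ := hh
    -- choose preimages
    choose x hxX hxz using fun i (hi : i ∈ t) => hz i hi
    have htpos : ∀ i ∈ t, (0 : ℝ) < α ⬝ᵥ z i := fun i hi => by
      rw [← hxz i hi]; exact hε.trans (hεlt _ (hxX i hi))
    -- new weights
    set w' : ι → ℝ := fun i => if hi : i ∈ t then ρ * w i * (α ⬝ᵥ z i) else 0 with hw'
    have hw'0 : ∀ i ∈ t, 0 ≤ w' i := fun i hi => by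
      simp only [hw', dif_pos hi]
      exact mul_nonneg (mul_nonneg hρ.le (hw0 i hi)) (htpos i hi).le
    have hheq : h = ∑ i ∈ t, w i • z i := by
      rw [← hcm, Finset.centerMass_eq_of_sum_1 _ _ hw1]
    have hsum : ∑ i ∈ t, w' i = 1 := by
      have : α ⬝ᵥ (ρ • h) = ρ * (α ⬝ᵥ h) := by simp [dotProduct_smul, smul_eq_mul]
      rw [this] at hα
      have hLh : α ⬝ᵥ h = ∑ i ∈ t, w i * (α ⬝ᵥ z i) := by
        rw [hheq, ← hLdef, map_sum]
        exact Finset.sum_congr rfl fun i hi => by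
          simp [hLdef, dotProduct_smul, smul_eq_mul]
      calc ∑ i ∈ t, w' i = ∑ i ∈ t, ρ * (w i * (α ⬝ᵥ z i)) := by
            refine Finset.sum_congr rfl fun i hi => ?_
            simp only [hw', dif_pos hi]; ring
        _ = ρ * ∑ i ∈ t, w i * (α ⬝ᵥ z i) := by rw [Finset.mul_sum]
        _ = 1 := by rw [← hLh]; exact hα
    have key : ρ • h = t.centerMass w' (fun i => (α ⬝ᵥ z i)⁻¹ • z i) := by
      rw [Finset.centerMass_eq_of_sum_1 _ _ hsum, hheq, Finset.smul_sum]
      refine Finset.sum_congr rfl fun i hi => ?_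
      simp only [hw', dif_pos hi, smul_smul]
      congr 1
      exact (mul_inv_cancel_right₀ (htpos i hi).ne' _).symm
    rw [key]
    refine Finset.centerMass_mem_convexHull t hw'0 (by rw [hsum]; norm_num) fun i hi => ?_
    exact ⟨x i hi, hxX i hi, by dsimp only; rw [hxz i hi]⟩
end

section
/- Let X ⊆ ℝⁿ be nonempty, let f = (f₁, …, f_m) : X → ℝᵐ and α ∈ ℝᵐ, and suppose there exists ε > 0 such that ⟨α, f(x)⟩ > ε for all x ∈ X, that F = { f(x) | x ∈ X } is bounded, and that additionally f₁(x) = 1 for all x ∈ X. Define G = { f(x)/⟨α, f(x)⟩ | x ∈ X }. Then conv(F) = { f ∈ ℝᵐ | there exists σ > 0 with f ∈ σ · conv(G) and f₁ = 1 }. -/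
open Pointwise Matrix

/-- Theorem 2, equation (11b): recovering conv(F) from conv(G) when f₁ ≡ 1. -/
theorem stmt2 (n m : ℕ) (hm : 0 < m) (X : Set (Fin n → ℝ)) (hX : X.Nonempty)
    (f : (Fin n → ℝ) → (Fin m → ℝ)) (α : Fin m → ℝ)
    (hpos : ∃ ε > (0 : ℝ), ∀ x ∈ X, ε < α ⬝ᵥ f x)
    (F G : Set (Fin m → ℝ))
    (hF : F = f '' X)
    (hG : G = (fun x => (α ⬝ᵥ f x)⁻¹ • f x) '' X)
    (hbdd : Bornology.IsBounded F)
    (hf1 : ∀ x ∈ X, f x ⟨0, hm⟩ = 1) :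
    convexHull ℝ F
      = {v : Fin m → ℝ | ∃ σ > (0 : ℝ), v ∈ σ • convexHull ℝ G ∧ v ⟨0, hm⟩ = 1} := by
  obtain ⟨ε, hε, hαf⟩ := hpos
  -- key facts about elements of F
  have hFfact : ∀ u ∈ F, u ⟨0, hm⟩ = 1 ∧ ε < α ⬝ᵥ u ∧ (α ⬝ᵥ u)⁻¹ • u ∈ G := by
    rw [hF]
    rintro u ⟨x, hx, rfl⟩
    exact ⟨hf1 x hx, hαf x hx, hG ▸ ⟨x, hx, rfl⟩⟩
  ext v
  constructor
  · intro hv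
    rw [convexHull_eq] at hv
    obtain ⟨ι, t, w, z, hw0, hw1, hzF, hvc⟩ := hv
    have hvs : v = ∑ i ∈ t, w i • z i := by
      rw [← hvc, Finset.centerMass_eq_of_sum_1 _ _ hw1]
    have hv1 : v ⟨0, hm⟩ = 1 := by
      rw [hvs, Finset.sum_apply]
      calc ∑ i ∈ t, (w i • z i) ⟨0, hm⟩ = ∑ i ∈ t, w i := by
            refine Finset.sum_congr rfl fun i hi => ?_
            simp [(hFfact _ (hzF i hi)).1]
        _ = 1 := hw1
    set σ : ℝ := ∑ i ∈ t, w i * (α ⬝ᵥ z i) with hσdef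
    have hσpos : 0 < σ := by
      have h1 : ε ≤ σ := by
        have : (∑ i ∈ t, w i * ε) ≤ σ := by
          refine Finset.sum_le_sum fun i hi => ?_
          exact mul_le_mul_of_nonneg_left (le_of_lt (hFfact _ (hzF i hi)).2.1) (hw0 i hi)
        rwa [← Finset.sum_mul, hw1, one_mul] at this
      linarith
    refine ⟨σ, hσpos, ?_, hv1⟩
    rw [Set.mem_smul_set_iff_inv_smul_mem₀ (ne_of_gt hσpos)]
    have hmem : t.centerMass (fun i => w i * (α ⬝ᵥ z i))
        (fun i => (α ⬝ᵥ z i)⁻¹ • z i) ∈ convexHull ℝ G := by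
      refine Finset.centerMass_mem_convexHull t (fun i hi => ?_) (by rwa [← hσdef])
        (fun i hi => (hFfact _ (hzF i hi)).2.2)
      have := (hFfact _ (hzF i hi)).2.1
      exact mul_nonneg (hw0 i hi) (by linarith)
    have heq : t.centerMass (fun i => w i * (α ⬝ᵥ z i))
        (fun i => (α ⬝ᵥ z i)⁻¹ • z i) = σ⁻¹ • v := by
      rw [show t.centerMass (fun i => w i * (α ⬝ᵥ z i)) (fun i => (α ⬝ᵥ z i)⁻¹ • z i)
          = (∑ i ∈ t, w i * (α ⬝ᵥ z i))⁻¹ •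
            ∑ i ∈ t, (w i * (α ⬝ᵥ z i)) • ((α ⬝ᵥ z i)⁻¹ • z i) from rfl, ← hσdef, hvs]
      congr 1
      refine Finset.sum_congr rfl fun i hi => ?_
      have hne : (α ⬝ᵥ z i) ≠ 0 := by
        have := (hFfact _ (hzF i hi)).2.1; linarith
      rw [smul_smul, mul_assoc, mul_inv_cancel₀ hne, mul_one]
    rwa [heq] at hmem
  · rintro ⟨σ, hσ, hmem, hv1⟩
    rw [Set.mem_smul_set_iff_inv_smul_mem₀ (ne_of_gt hσ), convexHull_eq] at hmem
    obtain ⟨ι, t, w, z, hw0, hw1, hzG, hc⟩ := hmem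
    have hzF : ∀ i ∈ t, ∃ p, p ∈ F ∧ z i = (α ⬝ᵥ p)⁻¹ • p := by
      intro i hi
      have := hzG i hi
      rw [hG] at this
      obtain ⟨x, hx, hzx⟩ := this
      exact ⟨f x, hF ▸ ⟨x, hx, rfl⟩, hzx.symm⟩
    choose! p hpF hzp using hzF
    set c : ι → ℝ := fun i => σ * w i * (α ⬝ᵥ p i)⁻¹ with hcdef
    have hc0 : ∀ i ∈ t, 0 ≤ c i := by
      intro i hi
      have h := (hFfact _ (hpF i hi)).2.1
      have : 0 < α ⬝ᵥ p i := by linarith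
      exact mul_nonneg (mul_nonneg hσ.le (hw0 i hi)) (inv_nonneg.mpr this.le)
    have hvsum : v = ∑ i ∈ t, c i • p i := by
      have h1 : σ⁻¹ • v = ∑ i ∈ t, w i • z i := by
        rw [← hc, Finset.centerMass_eq_of_sum_1 _ _ hw1]
      have h2 : v = σ • (σ⁻¹ • v) := by
        rw [smul_smul, mul_inv_cancel₀ (ne_of_gt hσ), one_smul]
      rw [h2, h1, Finset.smul_sum]
      refine Finset.sum_congr rfl fun i hi => ?_
      rw [hzp i hi, smul_smul, smul_smul]
    have hcsum : ∑ i ∈ t, c i = 1 := by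
      rw [← hv1, hvsum, Finset.sum_apply]
      refine (Finset.sum_congr rfl fun i hi => ?_).symm
      simp [(hFfact _ (hpF i hi)).1]
    have : t.centerMass c p ∈ convexHull ℝ F :=
      Finset.centerMass_mem_convexHull t hc0 (by rw [hcsum]; norm_num) hpF
    rwa [Finset.centerMass_eq_of_sum_1 _ _ hcsum, ← hvsum] at this
end

section
/- Let X ⊆ ℝⁿ be nonempty, let f = (f₁, …, f_m) : X → ℝᵐ and α ∈ ℝᵐ, and suppose there exists ε > 0 such that ⟨α, f(x)⟩ > ε for all x ∈ X. Define F = { f(x) | x ∈ X } and G = { f(x)/⟨α, f(x)⟩ | x ∈ X }. Then the closure of conv(G) equals { g ∈ ℝᵐ | ⟨α, g⟩ = 1 and ( there exists ρ > 0 with g ∈ ρ · cl conv(F), or g belongs to the recession cone of cl conv(F) ) }. -/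
open Pointwise Matrix Filter Topology

set_option maxHeartbeats 1000000

private lemma dot_cont {m : ℕ} (α : Fin m → ℝ) :
    Continuous fun y : Fin m → ℝ => α ⬝ᵥ y := by
  simp only [dotProduct]
  exact continuous_finset_sum _ fun i _ => continuous_const.mul (continuous_apply i)

private lemma dot_linear {m : ℕ} (α : Fin m → ℝ) :
    IsLinearMap ℝ fun y : Fin m → ℝ => α ⬝ᵥ y :=
  ⟨fun a b => dotProduct_add α a b, fun c a => by rw [dotProduct_smul]⟩

/-- Theorem 2, equation (12): closed convex hull of G via the closed convex hull
of F and its recession cone. -/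
theorem stmt3 (n m : ℕ) (X : Set (Fin n → ℝ)) (hX : X.Nonempty)
    (f : (Fin n → ℝ) → (Fin m → ℝ)) (α : Fin m → ℝ)
    (hpos : ∃ ε > (0 : ℝ), ∀ x ∈ X, ε < α ⬝ᵥ f x)
    (F G : Set (Fin m → ℝ))
    (hF : F = f '' X)
    (hG : G = (fun x => (α ⬝ᵥ f x)⁻¹ • f x) '' X) :
    closure (convexHull ℝ G)
      = {g : Fin m → ℝ | α ⬝ᵥ g = 1 ∧
          ((∃ ρ > (0 : ℝ), g ∈ ρ • closure (convexHull ℝ F)) ∨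
            (∀ c ∈ closure (convexHull ℝ F), ∀ t : ℝ, 0 ≤ t →
              c + t • g ∈ closure (convexHull ℝ F)))} := by
  obtain ⟨ε, hε0, hpos⟩ := hpos
  subst hF hG
  set φ : (Fin m → ℝ) → (Fin m → ℝ) := fun y => (α ⬝ᵥ y)⁻¹ • y with hφdef
  have hdc : Continuous fun y : Fin m → ℝ => α ⬝ᵥ y := dot_cont α
  set F : Set (Fin m → ℝ) := f '' X with hFdef
  set G : Set (Fin m → ℝ) := (fun x => (α ⬝ᵥ f x)⁻¹ • f x) '' X with hGdef
  set C : Set (Fin m → ℝ) := closure (convexHull ℝ F) with hCdef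
  have hεF : ∀ y ∈ convexHull ℝ F, ε ≤ α ⬝ᵥ y := by
    intro y hy
    have h : convexHull ℝ F ⊆ {y : Fin m → ℝ | ε ≤ α ⬝ᵥ y} := by
      apply convexHull_min
      · rintro _ ⟨x, hx, rfl⟩
        exact (hpos x hx).le
      · exact convex_halfSpace_ge (dot_linear α) ε
    exact h hy
  have hεC : ∀ y ∈ C, ε ≤ α ⬝ᵥ y := by
    intro y hy
    have h : C ⊆ {y : Fin m → ℝ | ε ≤ α ⬝ᵥ y} :=
      closure_minimal (fun z hz => hεF z hz) (isClosed_le continuous_const hdc)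
    exact h hy
  have hposF : ∀ y ∈ convexHull ℝ F, 0 < α ⬝ᵥ y := fun y hy => lt_of_lt_of_le hε0 (hεF y hy)
  have hposC : ∀ y ∈ C, 0 < α ⬝ᵥ y := fun y hy => lt_of_lt_of_le hε0 (hεC y hy)
  have hCclosed : IsClosed C := isClosed_closure
  have hCconvex : Convex ℝ C := (convex_convexHull ℝ F).closure
  have hsubC : convexHull ℝ F ⊆ C := subset_closure
  have hdotφ : ∀ y : Fin m → ℝ, 0 < α ⬝ᵥ y → α ⬝ᵥ (φ y) = 1 := by
    intro y hy
    simp only [hφdef, dotProduct_smul, smul_eq_mul]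
    field_simp
  -- conv G ⊆ φ '' conv F
  have hG1 : convexHull ℝ G ⊆ φ '' (convexHull ℝ F) := by
    apply convexHull_min
    · rintro _ ⟨x, hx, rfl⟩
      exact ⟨f x, subset_convexHull ℝ F ⟨x, hx, rfl⟩, rfl⟩
    · rintro a ⟨y₁, hy₁, rfl⟩ b ⟨y₂, hy₂, rfl⟩ θ σ hθ hσ hθσ
      have hs₁ : 0 < α ⬝ᵥ y₁ := hposF _ hy₁
      have hs₂ : 0 < α ⬝ᵥ y₂ := hposF _ hy₂
      set s₁ := α ⬝ᵥ y₁ with hs₁def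
      set s₂ := α ⬝ᵥ y₂ with hs₂def
      set T : ℝ := θ / s₁ + σ / s₂ with hTdef
      have hT : 0 < T := by
        by_cases hθ' : 0 < θ
        · exact add_pos_of_pos_of_nonneg (div_pos hθ' hs₁) (by positivity)
        · have hθ0 : θ = 0 := le_antisymm (not_lt.mp hθ') hθ
          have hσ' : 0 < σ := by rw [hθ0] at hθσ; linarith
          exact add_pos_of_nonneg_of_pos (by positivity) (div_pos hσ' hs₂)
      refine ⟨(θ / s₁ / T) • y₁ + (σ / s₂ / T) • y₂, ?_, ?_⟩
      · exact (convex_convexHull ℝ F) hy₁ hy₂ (by positivity) (by positivity)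
          (by rw [← add_div, ← hTdef, div_self hT.ne'])
      · have hdot : α ⬝ᵥ ((θ / s₁ / T) • y₁ + (σ / s₂ / T) • y₂) = 1 / T := by
          rw [dotProduct_add, dotProduct_smul, dotProduct_smul, smul_eq_mul, smul_eq_mul,
            ← hs₁def, ← hs₂def]
          have e1 : θ / s₁ / T * s₁ = θ / T := by
            field_simp
          have e2 : σ / s₂ / T * s₂ = σ / T := by
            field_simp
          rw [e1, e2, ← add_div, hθσ]
        simp only [hφdef, hdot]
        ext i
        simp only [Pi.add_apply, Pi.smul_apply, smul_eq_mul]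
        rw [← hs₁def, ← hs₂def]
        field_simp
  -- φ '' conv F ⊆ conv G
  have hG2 : ∀ y ∈ convexHull ℝ F, φ y ∈ convexHull ℝ G := by
    have key : convexHull ℝ F ⊆ {y : Fin m → ℝ | ε ≤ α ⬝ᵥ y ∧ φ y ∈ convexHull ℝ G} := by
      apply convexHull_min
      · rintro _ ⟨x, hx, rfl⟩
        exact ⟨(hpos x hx).le, subset_convexHull ℝ G ⟨x, hx, rfl⟩⟩
      · rintro y₁ ⟨hε₁, hm₁⟩ y₂ ⟨hε₂, hm₂⟩ θ σ hθ hσ hθσ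
        have hs₁ : 0 < α ⬝ᵥ y₁ := lt_of_lt_of_le hε0 hε₁
        have hs₂ : 0 < α ⬝ᵥ y₂ := lt_of_lt_of_le hε0 hε₂
        set s₁ := α ⬝ᵥ y₁ with hs₁def
        set s₂ := α ⬝ᵥ y₂ with hs₂def
        have hdot : α ⬝ᵥ (θ • y₁ + σ • y₂) = θ * s₁ + σ * s₂ := by
          rw [dotProduct_add, dotProduct_smul, dotProduct_smul, smul_eq_mul, smul_eq_mul,
            ← hs₁def, ← hs₂def]
        have hs : 0 < θ * s₁ + σ * s₂ := by nlinarith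
        constructor
        · show ε ≤ α ⬝ᵥ (θ • y₁ + σ • y₂)
          rw [hdot]; nlinarith
        · show φ (θ • y₁ + σ • y₂) ∈ convexHull ℝ G
          have heq : φ (θ • y₁ + σ • y₂)
              = (θ * s₁ / (θ * s₁ + σ * s₂)) • φ y₁ + (σ * s₂ / (θ * s₁ + σ * s₂)) • φ y₂ := by
            simp only [hφdef, hdot]
            ext i
            simp only [Pi.add_apply, Pi.smul_apply, smul_eq_mul]
            rw [← hs₁def, ← hs₂def]
            field_simp
          rw [heq]
          exact (convex_convexHull ℝ G) hm₁ hm₂ (by positivity) (by positivity)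
            (by rw [← add_div, div_self hs.ne'])
    intro y hy; exact (key hy).2
  -- φ maps C into closure conv G
  have hφC : ∀ c ∈ C, φ c ∈ closure (convexHull ℝ G) := by
    intro c hc
    have hcpos : 0 < α ⬝ᵥ c := hposC c hc
    obtain ⟨y, hy, hylim⟩ := mem_closure_iff_seq_limit.mp hc
    have hcont : ContinuousAt φ c := by
      have h1 : ContinuousAt (fun y : Fin m → ℝ => (α ⬝ᵥ y)⁻¹) c :=
        hdc.continuousAt.inv₀ hcpos.ne'
      exact h1.smul continuousAt_id
    exact mem_closure_of_tendsto (hcont.tendsto.comp hylim)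
      (Eventually.of_forall fun k => hG2 _ (hy k))
  ext g
  simp only [Set.mem_setOf_eq]
  constructor
  · intro hg
    have hgdot : α ⬝ᵥ g = 1 := by
      have hsub : closure (convexHull ℝ G) ⊆ {h : Fin m → ℝ | α ⬝ᵥ h = 1} := by
        apply closure_minimal
        · intro h hh
          obtain ⟨y, hy, rfl⟩ := hG1 hh
          exact hdotφ y (hposF y hy)
        · exact isClosed_eq hdc continuous_const
      exact hsub hg
    refine ⟨hgdot, ?_⟩
    obtain ⟨hseq, hmem, hlim⟩ := mem_closure_iff_seq_limit.mp hg
    choose y hy hyφ using fun k => hG1 (hmem k)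
    set ts : ℕ → ℝ := fun k => α ⬝ᵥ y k with htsdef
    have htε : ∀ k, ε ≤ ts k := fun k => hεF _ (hy k)
    have htpos : ∀ k, 0 < ts k := fun k => lt_of_lt_of_le hε0 (htε k)
    have hyk : ∀ k, y k = ts k • hseq k := by
      intro k
      rw [← hyφ k]
      simp only [hφdef, htsdef]
      rw [smul_smul, mul_inv_cancel₀ (htpos k).ne', one_smul]
    by_cases hb : ∃ M : ℝ, ∃ᶠ k in atTop, ts k ≤ M
    · left
      obtain ⟨M, hM⟩ := hb
      obtain ⟨ψ, hψ, hψle⟩ := extraction_of_frequently_atTop hM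
      have hmemI : ∀ k, ts (ψ k) ∈ Set.Icc ε M := fun k => ⟨htε _, hψle k⟩
      obtain ⟨τ, hτmem, ψ', hψ', hτlim⟩ := isCompact_Icc.tendsto_subseq hmemI
      have hτpos : 0 < τ := lt_of_lt_of_le hε0 hτmem.1
      have hglim : Tendsto (fun k => hseq (ψ (ψ' k))) atTop (𝓝 g) :=
        hlim.comp ((hψ.comp hψ').tendsto_atTop)
      have hτlim' : Tendsto (fun k => ts (ψ (ψ' k))) atTop (𝓝 τ) := by
        exact hτlim
      have hylim : Tendsto (fun k => y (ψ (ψ' k))) atTop (𝓝 (τ • g)) := by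
        exact (hτlim'.smul hglim).congr fun k => (hyk _).symm
      have hτg : τ • g ∈ C :=
        hCclosed.mem_of_tendsto hylim (Eventually.of_forall fun k => hsubC (hy _))
      exact ⟨τ⁻¹, inv_pos.mpr hτpos, τ • g, hτg, by exact inv_smul_smul₀ hτpos.ne' g⟩
    · right
      push_neg at hb
      have httop : Tendsto ts atTop atTop := by
        apply tendsto_atTop.2
        intro M
        have h := hb M
        filter_upwards [h] with k hk
        exact hk.le
      intro c hc r hr
      have hcoef : Tendsto (fun k => r / ts k) atTop (𝓝 0) :=
        tendsto_const_nhds.div_atTop httop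
      have hzlim : Tendsto (fun k => c + r • hseq k - (r / ts k) • c) atTop
          (𝓝 (c + r • g)) := by
        have h1 : Tendsto (fun k => c + r • hseq k) atTop (𝓝 (c + r • g)) :=
          tendsto_const_nhds.add (tendsto_const_nhds.smul hlim)
        have h2 : Tendsto (fun k => (r / ts k) • c) atTop (𝓝 ((0 : ℝ) • c)) :=
          hcoef.smul tendsto_const_nhds
        have h3 := h1.sub h2
        rw [zero_smul, sub_zero] at h3
        exact h3
      apply hCclosed.mem_of_tendsto hzlim
      have hev : ∀ᶠ k in atTop, max r 1 ≤ ts k := httop.eventually (eventually_ge_atTop _)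
      filter_upwards [hev] with k hk
      have htk : 0 < ts k := htpos k
      have hrk1 : r / ts k ≤ 1 := by
        rw [div_le_one htk]; exact le_trans (le_max_left r 1) hk
      have hrk0 : 0 ≤ r / ts k := div_nonneg hr htk.le
      have heq : c + r • hseq k - (r / ts k) • c
          = (1 - r / ts k) • c + (r / ts k) • y k := by
        rw [hyk k, smul_smul, div_mul_cancel₀ r htk.ne', sub_smul, one_smul]
        abel
      rw [heq]
      exact hCconvex hc (hsubC (hy k)) (by linarith) hrk0 (by ring)
  · rintro ⟨hgdot, hcase⟩
    rcases hcase with ⟨ρ, hρ, hgmem⟩ | hrec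
    · rw [Set.mem_smul_set] at hgmem
      obtain ⟨c, hc, rfl⟩ := hgmem
      have hcd : α ⬝ᵥ c = ρ⁻¹ := by
        have h : ρ * (α ⬝ᵥ c) = 1 := by
          rw [← smul_eq_mul, ← dotProduct_smul]; exact hgdot
        exact eq_inv_of_mul_eq_one_right h
      have h := hφC c hc
      simp only [hφdef] at h
      rwa [hcd, inv_inv] at h
    · obtain ⟨x₀, hx₀⟩ := hX
      have hc₀ : f x₀ ∈ C := hsubC (subset_convexHull ℝ F ⟨x₀, hx₀, rfl⟩)
      set c₀ := f x₀ with hc₀def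
      set s₀ := α ⬝ᵥ c₀ with hs₀def
      have hs₀pos : 0 < s₀ := hposC _ hc₀
      have hmem : ∀ k : ℕ, φ (c₀ + (k : ℝ) • g) ∈ closure (convexHull ℝ G) := fun k =>
        hφC _ (hrec c₀ hc₀ k (Nat.cast_nonneg k))
      have hdotk : ∀ k : ℕ, α ⬝ᵥ (c₀ + (k : ℝ) • g) = s₀ + k := by
        intro k
        rw [dotProduct_add, dotProduct_smul, smul_eq_mul, hgdot, mul_one, ← hs₀def]
      have hT : Tendsto (fun k : ℕ => s₀ + (k : ℝ)) atTop atTop :=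
        tendsto_atTop_add_const_left _ _ tendsto_natCast_atTop_atTop
      have h1 : Tendsto (fun k : ℕ => (s₀ + (k : ℝ))⁻¹) atTop (𝓝 0) :=
        hT.inv_tendsto_atTop
      have h2 : Tendsto (fun k : ℕ => (k : ℝ) / (s₀ + k)) atTop (𝓝 1) := by
        have h2' : Tendsto (fun k : ℕ => 1 - s₀ / (s₀ + k)) atTop (𝓝 (1 - 0)) :=
          tendsto_const_nhds.sub (tendsto_const_nhds.div_atTop hT)
        rw [sub_zero] at h2'
        apply h2'.congr
        intro k
        have hk : (0 : ℝ) < s₀ + k := add_pos_of_pos_of_nonneg hs₀pos (Nat.cast_nonneg k)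
        field_simp
        ring
      have hlim : Tendsto (fun k : ℕ => φ (c₀ + (k : ℝ) • g)) atTop (𝓝 g) := by
        have heq : ∀ k : ℕ, φ (c₀ + (k : ℝ) • g)
            = (s₀ + (k : ℝ))⁻¹ • c₀ + ((k : ℝ) / (s₀ + k)) • g := by
          intro k
          simp only [hφdef, hdotk k]
          have hk : (0 : ℝ) < s₀ + k := add_pos_of_pos_of_nonneg hs₀pos (Nat.cast_nonneg k)
          ext i
          simp only [Pi.add_apply, Pi.smul_apply, smul_eq_mul]
          field_simp
        have h := (h1.smul (tendsto_const_nhds (x := c₀))).add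
          (h2.smul (tendsto_const_nhds (x := g)))
        simp only [zero_smul, zero_add, one_smul] at h
        exact Tendsto.congr (fun k => (heq k).symm) h
      exact isClosed_closure.mem_of_tendsto hlim (Eventually.of_forall hmem)
end

section
/- Let n, m ≥ 1, let f : {0,1}ⁿ → ℝᵐ be any function, and let a₀ ∈ ℝ, a ∈ ℝⁿ be such that a₀ + aᵀx > 0 for every x ∈ {0,1}ⁿ. Define G = { (1/(a₀ + aᵀx), x/(a₀ + aᵀx), f(x)) | x ∈ {0,1}ⁿ } ⊆ ℝ × ℝⁿ × ℝᵐ and F = { (1, x, f(x)·(a₀ + aᵀx)) | x ∈ {0,1}ⁿ } ⊆ ℝ × ℝⁿ × ℝᵐ. Then conv(G) = { (ρ, y, g) | ρ > 0, (ρ, y, g) ∈ ρ · conv(F), and a₀ρ + aᵀy = 1 }. -/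
open Pointwise Matrix

section Aux

variable {n m : ℕ} (a₀ : ℝ) (a : Fin n → ℝ)

/-- The linear functional `p ↦ a₀ p.1 + aᵀ p.2.1`. -/
noncomputable def Lmap : (ℝ × (Fin n → ℝ) × (Fin m → ℝ)) →ₗ[ℝ] ℝ where
  toFun p := a₀ * p.1 + a ⬝ᵥ p.2.1
  map_add' p q := by
    simp [dotProduct, Finset.sum_add_distrib, mul_add]; ring
  map_smul' c p := by
    simp [dotProduct, Finset.mul_sum, mul_assoc, mul_add, mul_left_comm]

end Aux

/-- Remark 2: convex hull of a fractional 0-1 set with appended functions. -/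
theorem stmt5 (n m : ℕ) (hn : 1 ≤ n) (hm : 1 ≤ m)
    (f : (Fin n → ℝ) → (Fin m → ℝ)) (a₀ : ℝ) (a : Fin n → ℝ)
    (hpos : ∀ x : Fin n → ℝ, (∀ j, x j = 0 ∨ x j = 1) → 0 < a₀ + a ⬝ᵥ x)
    (G F : Set (ℝ × (Fin n → ℝ) × (Fin m → ℝ)))
    (hG : G = {p | ∃ x : Fin n → ℝ, (∀ j, x j = 0 ∨ x j = 1) ∧
        p = ((a₀ + a ⬝ᵥ x)⁻¹, (a₀ + a ⬝ᵥ x)⁻¹ • x, f x)})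
    (hF : F = {p | ∃ x : Fin n → ℝ, (∀ j, x j = 0 ∨ x j = 1) ∧
        p = (1, x, (a₀ + a ⬝ᵥ x) • f x)}) :
    convexHull ℝ G
      = {p : ℝ × (Fin n → ℝ) × (Fin m → ℝ) | 0 < p.1 ∧ p ∈ p.1 • convexHull ℝ F ∧
          a₀ * p.1 + a ⬝ᵥ p.2.1 = 1} := by
  classical
  set L : (ℝ × (Fin n → ℝ) × (Fin m → ℝ)) →ₗ[ℝ] ℝ := Lmap a₀ a with hL
  have hLdef : ∀ p : ℝ × (Fin n → ℝ) × (Fin m → ℝ), L p = a₀ * p.1 + a ⬝ᵥ p.2.1 :=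
    fun p => rfl
  ext p
  simp only [Set.mem_setOf_eq]
  constructor
  · intro hp
    rw [convexHull_eq] at hp
    obtain ⟨ι, t, w, z, hw0, hw1, hz, hcm⟩ := hp
    rw [Finset.centerMass_eq_of_sum_1 _ _ hw1] at hcm
    -- choose boolean points
    have hz' : ∀ i : ι, ∃ xv : Fin n → ℝ, i ∈ t → ((∀ j, xv j = 0 ∨ xv j = 1) ∧
        z i = ((a₀ + a ⬝ᵥ xv)⁻¹, (a₀ + a ⬝ᵥ xv)⁻¹ • xv, f xv)) := by
      intro i
      by_cases hi : i ∈ t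
      · obtain ⟨xv, h1, h2⟩ := hG ▸ hz i hi
        exact ⟨xv, fun _ => ⟨h1, h2⟩⟩
      · exact ⟨0, fun h => absurd h hi⟩
    choose x hx using hz'
    set s : ι → ℝ := fun i => a₀ + a ⬝ᵥ x i with hs
    have hspos : ∀ i ∈ t, 0 < s i := fun i hi => hpos _ ((hx i hi).1)
    have hzi : ∀ i ∈ t, z i = ((s i)⁻¹, (s i)⁻¹ • x i, f (x i)) := fun i hi => (hx i hi).2
    -- L of each generator is 1
    have hLz : ∀ i ∈ t, L (z i) = 1 := by
      intro i hi
      rw [hzi i hi, hLdef]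
      simp only [dotProduct_smul, smul_eq_mul]
      have hsne : (a₀ + a ⬝ᵥ x i) ≠ 0 := (hspos i hi).ne'
      field_simp
      exact div_self hsne
    -- first coordinate
    have hp1 : p.1 = ∑ i ∈ t, w i * (s i)⁻¹ := by
      rw [← hcm, Prod.fst_sum]
      refine Finset.sum_congr rfl fun i hi => ?_
      rw [hzi i hi]; rfl
    have hp1pos : 0 < p.1 := by
      rw [hp1]
      have hne : ∃ i ∈ t, w i ≠ 0 := by
        by_contra h
        push_neg at h
        rw [Finset.sum_eq_zero h] at hw1
        norm_num at hw1
      obtain ⟨i₀, hi₀, hwi₀⟩ := hne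
      refine Finset.sum_pos' (fun i hi => ?_) ⟨i₀, hi₀, ?_⟩
      · exact mul_nonneg (hw0 i hi) (inv_nonneg.2 (hspos i hi).le)
      · exact mul_pos (lt_of_le_of_ne (hw0 i₀ hi₀) (Ne.symm hwi₀)) (inv_pos.2 (hspos i₀ hi₀))
    have hLp : L p = 1 := by
      rw [← hcm, map_sum]
      rw [← hw1]
      refine Finset.sum_congr rfl fun i hi => ?_
      rw [_root_.map_smul, hLz i hi, smul_eq_mul, mul_one]

    refine ⟨hp1pos, ?_, hLp⟩
    -- membership in p.1 • convexHull F
    set zF : ι → ℝ × (Fin n → ℝ) × (Fin m → ℝ) := fun i => (1, x i, s i • f (x i)) with hzF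
    have hzFmem : ∀ i ∈ t, zF i ∈ F := by
      intro i hi
      rw [hF]
      exact ⟨x i, (hx i hi).1, rfl⟩
    set ν : ι → ℝ := fun i => w i * (s i)⁻¹ / p.1 with hν
    have hν0 : ∀ i ∈ t, 0 ≤ ν i := fun i hi =>
      div_nonneg (mul_nonneg (hw0 i hi) (inv_nonneg.2 (hspos i hi).le)) hp1pos.le
    have hν1 : ∑ i ∈ t, ν i = 1 := by
      rw [hν]
      simp only
      rw [← Finset.sum_div, ← hp1, div_self hp1pos.ne']
    have hq : t.centerMass ν zF ∈ convexHull ℝ F :=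
      t.centerMass_mem_convexHull hν0 (by rw [hν1]; norm_num) hzFmem
    rw [Set.mem_smul_set]
    refine ⟨t.centerMass ν zF, hq, ?_⟩
    rw [Finset.centerMass_eq_of_sum_1 _ _ hν1, Finset.smul_sum]
    have key : ∀ i ∈ t, p.1 • ν i • zF i = w i • z i := by
      intro i hi
      have hsne : s i ≠ 0 := (hspos i hi).ne'
      rw [smul_smul, hν]
      simp only
      rw [mul_div_assoc', mul_comm p.1, mul_div_assoc, div_self hp1pos.ne', mul_one,
        hzi i hi, ← smul_smul]
      congr 1
      simp [hzF, Prod.smul_mk, smul_smul, inv_mul_cancel₀ hsne, smul_eq_mul]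
    rw [Finset.sum_congr rfl key, hcm]
  · rintro ⟨hp1, hmem, hlin⟩
    rw [Set.mem_smul_set] at hmem
    obtain ⟨q, hq, hpq⟩ := hmem
    rw [convexHull_eq] at hq
    obtain ⟨ι, t, μ, zF, hμ0, hμ1, hzF, hcm⟩ := hq
    rw [Finset.centerMass_eq_of_sum_1 _ _ hμ1] at hcm
    have hz' : ∀ i : ι, ∃ xv : Fin n → ℝ, i ∈ t → ((∀ j, xv j = 0 ∨ xv j = 1) ∧
        zF i = (1, xv, (a₀ + a ⬝ᵥ xv) • f xv)) := by
      intro i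
      by_cases hi : i ∈ t
      · obtain ⟨xv, h1, h2⟩ := hF ▸ hzF i hi
        exact ⟨xv, fun _ => ⟨h1, h2⟩⟩
      · exact ⟨0, fun h => absurd h hi⟩
    choose x hx using hz'
    set s : ι → ℝ := fun i => a₀ + a ⬝ᵥ x i with hs
    have hspos : ∀ i ∈ t, 0 < s i := fun i hi => hpos _ ((hx i hi).1)
    have hzi : ∀ i ∈ t, zF i = (1, x i, s i • f (x i)) := fun i hi => (hx i hi).2
    set g : ι → ℝ × (Fin n → ℝ) × (Fin m → ℝ) :=
      fun i => ((s i)⁻¹, (s i)⁻¹ • x i, f (x i)) with hg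
    have hgmem : ∀ i ∈ t, g i ∈ G := by
      intro i hi
      rw [hG]
      exact ⟨x i, (hx i hi).1, rfl⟩
    set ν : ι → ℝ := fun i => p.1 * μ i * s i with hν
    have hν0 : ∀ i ∈ t, 0 ≤ ν i := fun i hi =>
      mul_nonneg (mul_nonneg hp1.le (hμ0 i hi)) (hspos i hi).le
    -- L of each F-generator is s i
    have hLzF : ∀ i ∈ t, L (zF i) = s i := by
      intro i hi
      rw [hzi i hi, hLdef]
      simp [hs]
    have hν1 : ∑ i ∈ t, ν i = 1 := by
      have : L p = 1 := hlin
      rw [← hpq, _root_.map_smul, ← hcm, map_sum, smul_eq_mul, Finset.mul_sum] at this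
      rw [← this]
      refine Finset.sum_congr rfl fun i hi => ?_
      rw [_root_.map_smul, hLzF i hi, smul_eq_mul, hν]
      ring
    have hrep : p = ∑ i ∈ t, ν i • g i := by
      rw [← hpq, ← hcm, Finset.smul_sum]
      refine Finset.sum_congr rfl fun i hi => ?_
      have hsne : s i ≠ 0 := (hspos i hi).ne'
      have hgs : s i • g i = (1, x i, s i • f (x i)) := by
        simp [hg, Prod.smul_mk, smul_smul, mul_inv_cancel₀ hsne, smul_eq_mul]
      have hνi : ν i = p.1 * μ i * s i := rfl
      rw [smul_smul, hzi i hi, ← hgs, smul_smul, hνi]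
    have := t.centerMass_mem_convexHull hν0 (by rw [hν1]; norm_num) hgmem
    rwa [Finset.centerMass_eq_of_sum_1 _ _ hν1, ← hrep] at this
end

section
/- For i ∈ {1,…,m}, let Dᵢ ⊆ ℝ^{nᵢ} × ℝᵏ, and define D = { (x₁, …, x_m, y) ∈ ℝ^{n₁} × ⋯ × ℝ^{n_m} × ℝᵏ | (xᵢ, y) ∈ Dᵢ for every i }. If the projections of D₁, …, D_m onto the y-coordinates are all equal to a common set V ⊆ ℝᵏ, and V is a finite set of affinely independent points, then conv(D) = { (x₁, …, x_m, y) | (xᵢ, y) ∈ conv(Dᵢ) for every i ∈ {1,…,m} }. -/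
/-- Uniqueness of affine weights over a finite affinely independent set. -/
lemma uniq_wts {k : ℕ} {V : Set (Fin k → ℝ)} (hVfin : V.Finite)
    (hVaff : AffineIndependent ℝ ((↑) : V → (Fin k → ℝ)))
    (a b : (Fin k → ℝ) → ℝ)
    (ha1 : ∑ v ∈ hVfin.toFinset, a v = 1) (hb1 : ∑ v ∈ hVfin.toFinset, b v = 1)
    (hab : ∑ v ∈ hVfin.toFinset, a v • v = ∑ v ∈ hVfin.toFinset, b v • v) :
    ∀ v ∈ hVfin.toFinset, a v = b v := by
  haveI := hVfin.fintype
  have hmem : ∀ x, x ∈ hVfin.toFinset ↔ x ∈ V := fun x => hVfin.mem_toFinset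
  have ha1' : ∑ v : V, a ↑v = 1 := by
    rw [← Finset.sum_subtype hVfin.toFinset hmem a]; exact ha1
  have hb1' : ∑ v : V, b ↑v = 1 := by
    rw [← Finset.sum_subtype hVfin.toFinset hmem b]; exact hb1
  have hab' : ∑ v : V, a ↑v • (v : Fin k → ℝ) = ∑ v : V, b ↑v • (v : Fin k → ℝ) := by
    rw [← Finset.sum_subtype hVfin.toFinset hmem (fun v => a v • v),
      ← Finset.sum_subtype hVfin.toFinset hmem (fun v => b v • v)]
    exact hab
  have h := hVaff.indicator_eq_of_affineCombination_eq Finset.univ Finset.univ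
    (fun v => a ↑v) (fun v => b ↑v) ha1' hb1' (by
      rw [Finset.affineCombination_eq_linear_combination _ _ _ ha1',
        Finset.affineCombination_eq_linear_combination _ _ _ hb1']
      exact hab')
  intro v hv
  have hvV : v ∈ V := hVfin.mem_toFinset.1 hv
  have := congrFun h ⟨v, hvV⟩
  simpa using this

/-- Lemma 2 (decomposition over a common simplex of affinely independent points). -/
theorem stmt6 (m k : ℕ) (n : Fin m → ℕ)
    (D : ∀ i : Fin m, Set ((Fin (n i) → ℝ) × (Fin k → ℝ)))
    (V : Set (Fin k → ℝ)) (hVfin : V.Finite)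
    (hVaff : AffineIndependent ℝ ((↑) : V → (Fin k → ℝ)))
    (hproj : ∀ i, Prod.snd '' D i = V)
    (Dbig : Set ((∀ i : Fin m, Fin (n i) → ℝ) × (Fin k → ℝ)))
    (hD : Dbig = {p | ∀ i, (p.1 i, p.2) ∈ D i}) :
    convexHull ℝ Dbig
      = {p : (∀ i : Fin m, Fin (n i) → ℝ) × (Fin k → ℝ) |
          ∀ i, (p.1 i, p.2) ∈ convexHull ℝ (D i)} := by
  classical
  apply Set.Subset.antisymm
  · -- easy direction
    intro p hp
    intro i
    have hsub : convexHull ℝ Dbig ⊆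
        (fun p : (∀ i : Fin m, Fin (n i) → ℝ) × (Fin k → ℝ) => (p.1 i, p.2)) ⁻¹'
          (convexHull ℝ (D i)) := by
      apply convexHull_min
      · intro q hq
        exact subset_convexHull ℝ (D i) (by rw [hD] at hq; exact hq i)
      · exact (convex_convexHull ℝ (D i)).linear_preimage
          ((LinearMap.proj i : (∀ j, Fin (n j) → ℝ) →ₗ[ℝ] (Fin (n i) → ℝ)).prodMap
            (LinearMap.id : (Fin k → ℝ) →ₗ[ℝ] (Fin k → ℝ)))
    exact hsub hp
  · rintro ⟨x, y⟩ hp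
    simp only [Set.mem_setOf_eq] at hp
    by_cases hm : m = 0
    · subst hm
      have hDu : Dbig = Set.univ := by
        rw [hD]; ext q; simp only [Set.mem_setOf_eq, Set.mem_univ, iff_true]
        intro i; exact i.elim0
      rw [hDu, convexHull_univ]; trivial
    have hm0 : 0 < m := Nat.pos_of_ne_zero hm
    set i₀ : Fin m := ⟨0, hm0⟩ with hi₀
    simp only [convexHull_eq, Set.mem_setOf_eq] at hp
    choose ι t w z hw0 hw1 hz hcm using hp
    have hsum : ∀ i, ∑ j ∈ t i, w i j • z i j = (x i, y) := by
      intro i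
      rw [← Finset.centerMass_eq_of_sum_1 _ _ (hw1 i)]
      exact hcm i
    have hx : ∀ i, ∑ j ∈ t i, w i j • (z i j).1 = x i := by
      intro i
      have := congrArg Prod.fst (hsum i)
      simpa [Prod.fst_sum] using this
    have hy : ∀ i, ∑ j ∈ t i, w i j • (z i j).2 = y := by
      intro i
      have := congrArg Prod.snd (hsum i)
      simpa [Prod.snd_sum] using this
    set Vf := hVfin.toFinset with hVf
    have hzV : ∀ i, ∀ j ∈ t i, (z i j).2 ∈ Vf := by
      intro i j hj
      rw [hVf, Set.Finite.mem_toFinset, ← hproj i]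
      exact ⟨z i j, hz i j hj, rfl⟩
    set fib := fun (i : Fin m) (v : Fin k → ℝ) =>
      (t i).filter (fun j => (z i j).2 = v) with hfib
    set W := fun (i : Fin m) (v : Fin k → ℝ) => ∑ j ∈ fib i v, w i j with hW
    have hW1 : ∀ i, ∑ v ∈ Vf, W i v = 1 := by
      intro i
      rw [hW]
      simp only [hfib]
      rw [Finset.sum_fiberwise_of_maps_to (hzV i)]
      exact hw1 i
    have hWy : ∀ i, ∑ v ∈ Vf, W i v • v = y := by
      intro i
      have h1 : ∑ v ∈ Vf, ∑ j ∈ fib i v, w i j • (z i j).2 = y := by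
        simp only [hfib]
        rw [Finset.sum_fiberwise_of_maps_to (hzV i)]
        exact hy i
      rw [← h1]
      apply Finset.sum_congr rfl
      intro v hv
      rw [hW]
      rw [Finset.sum_smul]
      apply Finset.sum_congr rfl
      intro j hj
      rw [(Finset.mem_filter.1 hj).2]
    have hW0 : ∀ i v, 0 ≤ W i v :=
      fun i v => Finset.sum_nonneg fun j hj => hw0 i j (Finset.mem_filter.1 hj).1
    set ω := W i₀ with hω
    have hWeq : ∀ i, ∀ v ∈ Vf, W i v = ω v := by
      intro i
      exact uniq_wts hVfin hVaff (W i) ω (hW1 i) (hW1 i₀) (by rw [hWy i, hWy i₀])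
    set Vf' := Vf.filter (fun v => ω v ≠ 0) with hVf'
    set X := fun (v : Fin k → ℝ) (i : Fin m) =>
      (ω v)⁻¹ • ∑ j ∈ fib i v, w i j • (z i j).1 with hX
    have hfibzero : ∀ i, ∀ v ∈ Vf, ω v = 0 → ∑ j ∈ fib i v, w i j • (z i j).1 = 0 := by
      intro i v hv h0
      apply Finset.sum_eq_zero
      intro j hj
      have hs0 : ∑ j ∈ fib i v, w i j = 0 := by
        have h' := hWeq i v hv; rw [h0] at h'; exact h'
      have : w i j = 0 :=
        (Finset.sum_eq_zero_iff_of_nonneg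
          (fun j hj => hw0 i j (Finset.mem_filter.1 hj).1)).1 hs0 j hj
      rw [this, zero_smul]
    -- decomposition of the point
    have hdecomp : ((x, y) : (∀ i : Fin m, Fin (n i) → ℝ) × (Fin k → ℝ))
        = ∑ v ∈ Vf', ω v • ((X v, v) : (∀ i : Fin m, Fin (n i) → ℝ) × (Fin k → ℝ)) := by
      apply Prod.ext
      · show x = (∑ v ∈ Vf', ω v • ((X v, v) : _ × (Fin k → ℝ))).1
        rw [Prod.fst_sum]
        funext i
        rw [Finset.sum_apply]
        have h1 : ∀ v ∈ Vf', (ω v • ((X v, v) : _ × (Fin k → ℝ))).1 i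
            = ∑ j ∈ fib i v, w i j • (z i j).1 := by
          intro v hv
          have hvne : ω v ≠ 0 := (Finset.mem_filter.1 hv).2
          show (ω v • X v) i = _
          rw [Pi.smul_apply, hX]
          simp only
          rw [smul_smul, mul_inv_cancel₀ hvne, one_smul]
        rw [Finset.sum_congr rfl h1]
        rw [hVf']
        rw [Finset.sum_filter_of_ne (fun v hv hne => by
          intro h0; exact hne (hfibzero i v hv h0))]
        simp only [hfib]
        rw [Finset.sum_fiberwise_of_maps_to (hzV i)]
        exact (hx i).symm
      · show y = (∑ v ∈ Vf', ω v • ((X v, v) : _ × (Fin k → ℝ))).2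
        rw [Prod.snd_sum]
        have h1 : ∀ v ∈ Vf', (ω v • ((X v, v) : _ × (Fin k → ℝ))).2 = ω v • v :=
          fun v hv => rfl
        rw [Finset.sum_congr rfl h1, hVf']
        rw [Finset.sum_filter_of_ne (fun v hv hne => by
          intro h0; exact hne (by rw [h0, zero_smul]))]
        exact (hWy i₀).symm
    -- each piece is in the convex hull of Dbig
    have hmemhull : ∀ v ∈ Vf',
        ((X v, v) : (∀ i : Fin m, Fin (n i) → ℝ) × (Fin k → ℝ)) ∈ convexHull ℝ Dbig := by
      intro v hv
      have hvVf : v ∈ Vf := (Finset.mem_filter.1 hv).1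
      have hvne : ω v ≠ 0 := (Finset.mem_filter.1 hv).2
      have hXmem : ∀ i, X v i ∈ convexHull ℝ {q : Fin (n i) → ℝ | (q, v) ∈ D i} := by
        intro i
        have hWv : ∑ j ∈ fib i v, w i j = ω v := hWeq i v hvVf
        have hpos : 0 < ∑ j ∈ fib i v, w i j := by
          rw [hWv]; exact lt_of_le_of_ne (hW0 i₀ v) (Ne.symm hvne)
        have hmem := Finset.centerMass_mem_convexHull
          (s := {q : Fin (n i) → ℝ | (q, v) ∈ D i}) (fib i v)
          (fun j hj => hw0 i j (Finset.mem_filter.1 hj).1) hpos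
          (z := fun j => (z i j).1)
          (fun j hj => by
            show ((z i j).1, v) ∈ D i
            rw [← (Finset.mem_filter.1 hj).2]
            simpa using hz i j (Finset.mem_filter.1 hj).1)
        have hXeq : (fib i v).centerMass (w i) (fun j => (z i j).1) = X v i := by
          rw [Finset.centerMass, hWv, hX]
        rwa [hXeq] at hmem
      have hsub : ((Set.univ.pi fun i => {q : Fin (n i) → ℝ | (q, v) ∈ D i}) ×ˢ
          ({v} : Set (Fin k → ℝ))) ⊆ Dbig := by
        rintro ⟨a, b⟩ ⟨ha, hb⟩
        rw [hD]
        intro i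
        have hb' : b = v := hb
        subst hb'
        exact ha i (Set.mem_univ i)
      apply convexHull_mono hsub
      rw [convexHull_prod, convexHull_pi, convexHull_singleton]
      exact ⟨fun i _ => hXmem i, rfl⟩
    rw [hdecomp]
    apply (convex_convexHull ℝ Dbig).sum_mem
      (fun v hv => hW0 i₀ v) ?_ hmemhull
    rw [hVf', Finset.sum_filter_ne_zero]
    exact hW1 i₀
end

section
/- Let G = ([n], E) be a finite simple graph (no self-loops), let a_{ij} ∈ ℝ for (i,j) ∈ E, c ∈ ℝⁿ, c₀ ∈ ℝ, and set q_G(x) = Σ_{(i,j)∈E} a_{ij} xᵢxⱼ + cᵀx + c₀. Assume q_G(x) > 0 for all x ∈ [0,1]ⁿ. Let QP_G = conv{ (x, z) ∈ ℝⁿ × ℝ^E | x ∈ {0,1}ⁿ, z_{ij} = xᵢxⱼ for (i,j) ∈ E } and G_G = { (1, x, z)/q_G(x) | x ∈ [0,1]ⁿ, z_{ij} = xᵢxⱼ for (i,j) ∈ E }. Then conv(G_G) = { (ρ, y, w) | ρ ≥ 0, (y, w) ∈ ρ · QP_G, and Σ_{(i,j)∈E} a_{ij} w_{ij} + cᵀy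 + c₀ρ = 1 }, and moreover QP_G = { (x, z) | there exists σ > 0 with (1, x, z) ∈ σ · conv(G_G) }. -/
open Pointwise Matrix


lemma key_sum {n : ℕ} (x : Fin n → ℝ) (S : Finset (Fin n)) :
    ∑ v : Fin n → Bool,
      (∏ i, if v i then x i else 1 - x i) * (∏ i ∈ S, if v i then (1:ℝ) else 0)
      = ∏ i ∈ S, x i := by
  set f : Fin n → Bool → ℝ := fun i b =>
    (if b then x i else 1 - x i) * (if i ∈ S then (if b then (1:ℝ) else 0) else 1) with hf
  have h1 : ∀ v : Fin n → Bool,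
      (∏ i, if v i then x i else 1 - x i) * (∏ i ∈ S, if v i then (1:ℝ) else 0)
      = ∏ i, f i (v i) := by
    intro v
    rw [hf]
    simp only
    rw [Finset.prod_mul_distrib, Fintype.prod_ite_mem]
  simp_rw [h1]
  rw [← Fintype.prod_sum f, ← Fintype.prod_ite_mem S x]
  refine Finset.prod_congr rfl fun i _ => ?_
  by_cases h : i ∈ S <;> simp [hf, h] <;> ring

def bpt {n : ℕ} (E : Finset (Fin n × Fin n)) (v : Fin n → Bool) :
    (Fin n → ℝ) × (↥E → ℝ) :=
  (fun i => if v i then 1 else 0,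
   fun e => (if v e.val.1 then (1:ℝ) else 0) * (if v e.val.2 then (1:ℝ) else 0))

lemma frac_mem {n : ℕ} (E : Finset (Fin n × Fin n)) (hE : ∀ e ∈ E, e.1 ≠ e.2)
    (x : Fin n → ℝ) (hx : ∀ j, 0 ≤ x j ∧ x j ≤ 1) :
    (x, fun e : ↥E => x e.val.1 * x e.val.2) ∈
      convexHull ℝ {p : (Fin n → ℝ) × (↥E → ℝ) |
        (∀ j, p.1 j = 0 ∨ p.1 j = 1) ∧
        ∀ e : ↥E, p.2 e = p.1 e.val.1 * p.1 e.val.2} := by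
  set w : (Fin n → Bool) → ℝ := fun v => ∏ i, if v i then x i else 1 - x i with hw
  have hw0 : ∀ v, 0 ≤ w v := by
    intro v
    refine Finset.prod_nonneg fun i _ => ?_
    by_cases h : v i <;> simp [h]
    · exact (hx i).1
    · linarith [(hx i).2]
  have hw1 : ∑ v : Fin n → Bool, w v = 1 := by
    simpa using key_sum x (∅ : Finset (Fin n))
  have hmemV : ∀ v : Fin n → Bool, bpt E v ∈ {p : (Fin n → ℝ) × (↥E → ℝ) |
      (∀ j, p.1 j = 0 ∨ p.1 j = 1) ∧
      ∀ e : ↥E, p.2 e = p.1 e.val.1 * p.1 e.val.2} := by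
    intro v
    constructor
    · intro j; by_cases h : v j <;> simp [bpt, h]
    · intro e; rfl
  have heq : ∑ v : Fin n → Bool, w v • bpt E v
      = (x, fun e : ↥E => x e.val.1 * x e.val.2) := by
    refine Prod.ext ?_ ?_
    · rw [Prod.fst_sum]
      funext j
      rw [Finset.sum_apply]
      have := key_sum x ({j} : Finset (Fin n))
      simp only [Finset.prod_singleton] at this
      simpa [bpt, hw] using this
    · rw [Prod.snd_sum]
      funext e
      rw [Finset.sum_apply]
      have hne : e.val.1 ≠ e.val.2 := hE e.val e.prop
      have := key_sum x ({e.val.1, e.val.2} : Finset (Fin n))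
      simp only [Finset.prod_pair hne] at this
      simpa [bpt, hw] using this
  rw [← heq]
  exact (convex_convexHull ℝ _).sum_mem (fun v _ => hw0 v) hw1 (fun v _ => subset_convexHull ℝ _ (hmemV v))

def Lfun {n : ℕ} (E : Finset (Fin n × Fin n)) (a : Fin n × Fin n → ℝ) (c : Fin n → ℝ)
    (c₀ : ℝ) : (ℝ × (Fin n → ℝ) × (↥E → ℝ)) →ₗ[ℝ] ℝ where
  toFun p := (∑ e : ↥E, a e.val * p.2.2 e) + c ⬝ᵥ p.2.1 + c₀ * p.1
  map_add' p u := by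
    simp [dotProduct_add, mul_add, Finset.sum_add_distrib]
    ring
  map_smul' r p := by
    have h : ∑ e : ↥E, a e.val * (r • p).2.2 e = r * ∑ e : ↥E, a e.val * p.2.2 e := by
      rw [Finset.mul_sum]
      refine Finset.sum_congr rfl fun e _ => ?_
      simp [mul_left_comm]
    show (∑ e : ↥E, a e.val * (r • p).2.2 e) + c ⬝ᵥ (r • p).2.1 + c₀ * (r • p).1
        = (RingHom.id ℝ) r • ((∑ e : ↥E, a e.val * p.2.2 e) + c ⬝ᵥ p.2.1 + c₀ * p.1)
    rw [h]
    simp only [Prod.smul_snd, Prod.smul_fst, dotProduct_smul, smul_eq_mul, RingHom.id_apply]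
    ring


set_option maxHeartbeats 1000000 in
/-- Proposition 2: equivalence between the convexification of the bilinear fractional
set and the boolean quadric polytope. -/
theorem stmt7 (n : ℕ) (E : Finset (Fin n × Fin n)) (hE : ∀ e ∈ E, e.1 ≠ e.2)
    (a : Fin n × Fin n → ℝ) (c : Fin n → ℝ) (c₀ : ℝ)
    (q : (Fin n → ℝ) → ℝ)
    (hq : q = fun x => (∑ e ∈ E, a e * (x e.1 * x e.2)) + c ⬝ᵥ x + c₀)
    (hqpos : ∀ x : Fin n → ℝ, (∀ j, 0 ≤ x j ∧ x j ≤ 1) → 0 < q x)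
    (QP : Set ((Fin n → ℝ) × (↥E → ℝ)))
    (hQP : QP = convexHull ℝ {p : (Fin n → ℝ) × (↥E → ℝ) |
        (∀ j, p.1 j = 0 ∨ p.1 j = 1) ∧
        ∀ e : ↥E, p.2 e = p.1 e.val.1 * p.1 e.val.2})
    (GG : Set (ℝ × (Fin n → ℝ) × (↥E → ℝ)))
    (hGG : GG = {p | ∃ x : Fin n → ℝ, (∀ j, 0 ≤ x j ∧ x j ≤ 1) ∧
        p = ((q x)⁻¹, (q x)⁻¹ • x, fun e : ↥E => (q x)⁻¹ * (x e.val.1 * x e.val.2))}) :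
    convexHull ℝ GG
      = {p : ℝ × (Fin n → ℝ) × (↥E → ℝ) | 0 ≤ p.1 ∧ (p.2.1, p.2.2) ∈ p.1 • QP ∧
          (∑ e : ↥E, a e.val * p.2.2 e) + c ⬝ᵥ p.2.1 + c₀ * p.1 = 1} ∧
    QP = {p : (Fin n → ℝ) × (↥E → ℝ) |
        ∃ σ > (0 : ℝ), ((1 : ℝ), p.1, p.2) ∈ σ • convexHull ℝ GG} := by
  set S : Set (ℝ × (Fin n → ℝ) × (↥E → ℝ)) :=
    {p : ℝ × (Fin n → ℝ) × (↥E → ℝ) | 0 ≤ p.1 ∧ (p.2.1, p.2.2) ∈ p.1 • QP ∧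
      (∑ e : ↥E, a e.val * p.2.2 e) + c ⬝ᵥ p.2.1 + c₀ * p.1 = 1} with hSdef
  -- q in subtype-sum form
  have hq' : ∀ x : Fin n → ℝ,
      q x = (∑ e : ↥E, a e.val * (x e.val.1 * x e.val.2)) + c ⬝ᵥ x + c₀ := by
    intro x
    rw [hq]
    have := (Finset.sum_coe_sort E (fun e => a e * (x e.1 * x e.2))).symm
    simp only [this]
  have hLq : ∀ x : Fin n → ℝ,
      Lfun E a c c₀ ((1:ℝ), x, fun e : ↥E => x e.val.1 * x e.val.2) = q x := by
    intro x
    show (∑ e : ↥E, a e.val * (x e.val.1 * x e.val.2)) + c ⬝ᵥ x + c₀ * 1 = q x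
    rw [hq' x]; ring
  -- members of S have positive first coordinate
  have hpos : ∀ p ∈ S, 0 < p.1 := by
    intro p hp
    obtain ⟨h0, hmem, hL⟩ := hp
    rcases h0.lt_or_eq with h | h
    · exact h
    · exfalso
      rw [← h, Set.mem_smul_set] at hmem
      obtain ⟨u, -, hu⟩ := hmem
      rw [zero_smul] at hu
      have h1 : p.2.1 = (0 : Fin n → ℝ) := congrArg Prod.fst hu.symm
      have h2 : p.2.2 = (0 : ↥E → ℝ) := congrArg Prod.snd hu.symm
      rw [h1, h2, ← h] at hL
      simp at hL
  -- GG ⊆ S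
  have hGsubS : GG ⊆ S := by
    rw [hGG]
    rintro p ⟨x, hx, rfl⟩
    have hqx := hqpos x hx
    have hsmul : (q x)⁻¹ • ((x, fun e : ↥E => x e.val.1 * x e.val.2) :
        (Fin n → ℝ) × (↥E → ℝ))
        = ((q x)⁻¹ • x, fun e : ↥E => (q x)⁻¹ * (x e.val.1 * x e.val.2)) := by
      refine Prod.ext rfl (funext fun e => ?_)
      simp
    refine ⟨inv_nonneg.mpr hqx.le, ?_, ?_⟩
    · rw [Set.mem_smul_set]
      exact ⟨(x, fun e : ↥E => x e.val.1 * x e.val.2),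
        by rw [hQP]; exact frac_mem E hE x hx, hsmul⟩
    · show Lfun E a c c₀ ((q x)⁻¹, (q x)⁻¹ • x,
        fun e : ↥E => (q x)⁻¹ * (x e.val.1 * x e.val.2)) = 1
      have htrip : ((q x)⁻¹, (q x)⁻¹ • x,
          fun e : ↥E => (q x)⁻¹ * (x e.val.1 * x e.val.2))
          = (q x)⁻¹ • ((1:ℝ), x, fun e : ↥E => x e.val.1 * x e.val.2) := by
        refine Prod.ext (by simp) (Prod.ext rfl (funext fun e => by simp))
      rw [htrip, _root_.map_smul, hLq, smul_eq_mul, inv_mul_cancel₀ hqx.ne']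
  -- S is convex
  have hSconv : Convex ℝ S := by
    rintro p hp u hu s t hs ht hst
    have hp1 := hpos p hp
    have hu1 := hpos u hu
    obtain ⟨-, hpQ, hLp⟩ := hp
    obtain ⟨-, huQ, hLu⟩ := hu
    have hρ : 0 < s * p.1 + t * u.1 := by
      rcases hs.lt_or_eq with h | h
      · exact add_pos_of_pos_of_nonneg (mul_pos h hp1) (mul_nonneg ht hu1.le)
      · have ht1 : t = 1 := by linarith
        rw [← h, ht1]; simpa using hu1
    have hfst : (s • p + t • u).1 = s * p.1 + t * u.1 := by simp
    refine ⟨by rw [hfst]; exact hρ.le, ?_, ?_⟩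
    · -- membership in the scaled polytope
      have hQPc : Convex ℝ QP := hQP ▸ convex_convexHull ℝ _
      rw [Set.mem_smul_set]
      rw [Set.mem_smul_set] at hpQ huQ
      obtain ⟨yp, hypQP, hyp⟩ := hpQ
      obtain ⟨yu, hyuQP, hyu⟩ := huQ
      set ρ := s * p.1 + t * u.1 with hρdef
      refine ⟨((s * p.1)/ρ) • yp + ((t * u.1)/ρ) • yu,
        hQPc hypQP hyuQP (by positivity) (by positivity) (by field_simp; exact hρdef.symm), ?_⟩
      have hc1 : ρ * ((s * p.1)/ρ) = s * p.1 := by field_simp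
      have hc2 : ρ * ((t * u.1)/ρ) = t * u.1 := by field_simp
      rw [hfst, smul_add, smul_smul, smul_smul, hc1, hc2]
      have h1 : ((s • p + t • u).2.1, (s • p + t • u).2.2) = s • p.2 + t • u.2 := by
        refine Prod.ext (by simp) (by simp)
      have hyp' : p.1 • yp = p.2 := hyp.trans Prod.mk.eta
      have hyu' : u.1 • yu = u.2 := hyu.trans Prod.mk.eta
      rw [h1, ← hyp', ← hyu', smul_smul, smul_smul]
    · show Lfun E a c c₀ (s • p + t • u) = 1
      have hLp' : Lfun E a c c₀ p = 1 := hLp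
      have hLu' : Lfun E a c c₀ u = 1 := hLu
      rw [_root_.map_add, _root_.map_smul, _root_.map_smul, hLp', hLu', smul_eq_mul, smul_eq_mul,
        mul_one, mul_one, hst]
  -- S ⊆ convexHull GG
  have hSsup : S ⊆ convexHull ℝ GG := by
    intro p hp
    have hρ := hpos p hp
    obtain ⟨h0, hmemQ, hL⟩ := hp
    rw [Set.mem_smul_set] at hmemQ
    obtain ⟨u, huQP, hu⟩ := hmemQ
    rw [hQP, convexHull_eq] at huQP
    obtain ⟨ι, t, lam, z, hl0, hl1, hzV, hcm⟩ := huQP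
    have hu' : u = ∑ k ∈ t, lam k • z k := by
      rw [← hcm, Finset.centerMass_eq_of_sum_1 _ _ hl1]
    have hzb : ∀ k ∈ t, ∀ j, 0 ≤ (z k).1 j ∧ (z k).1 j ≤ 1 := by
      intro k hk j
      rcases (hzV k hk).1 j with h | h <;> simp [h]
    have hqz : ∀ k ∈ t, 0 < q (z k).1 := fun k hk => hqpos _ (hzb k hk)
    set g : ι → ℝ × (Fin n → ℝ) × (↥E → ℝ) := fun k =>
      ((q (z k).1)⁻¹, (q (z k).1)⁻¹ • (z k).1,
       fun e : ↥E => (q (z k).1)⁻¹ * ((z k).1 e.val.1 * (z k).1 e.val.2)) with hg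
    have hgGG : ∀ k ∈ t, g k ∈ GG := by
      intro k hk
      rw [hGG]
      exact ⟨(z k).1, hzb k hk, rfl⟩
    set μ : ι → ℝ := fun k => (p.1 * lam k) * q ((z k).1) with hμ
    have hμ0 : ∀ k ∈ t, 0 ≤ μ k := fun k hk =>
      mul_nonneg (mul_nonneg hρ.le (hl0 k hk)) (hqz k hk).le
    have hkey : ∀ k ∈ t, μ k • g k = (p.1 * lam k) • ((1:ℝ), (z k).1, (z k).2) := by
      intro k hk
      have hqk := (hqz k hk).ne'
      refine Prod.ext ?_ (Prod.ext ?_ ?_)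
      · show μ k * (q (z k).1)⁻¹ = (p.1 * lam k) * 1
        rw [hμ]; field_simp
      · show μ k • ((q (z k).1)⁻¹ • (z k).1) = (p.1 * lam k) • (z k).1
        rw [smul_smul]
        congr 1
        rw [hμ]; simp only [smul_eq_mul]; field_simp
      · show (fun e : ↥E => μ k * ((q (z k).1)⁻¹ * ((z k).1 e.val.1 * (z k).1 e.val.2)))
            = (p.1 * lam k) • (z k).2
        funext e
        have hze := (hzV k hk).2 e
        simp only [Pi.smul_apply, smul_eq_mul, hze, hμ]
        field_simp
    have hdecomp : p = ∑ k ∈ t, μ k • g k := by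
      rw [Finset.sum_congr rfl hkey]
      refine Prod.ext ?_ ?_
      · rw [Prod.fst_sum]
        simp only [Prod.smul_fst, smul_eq_mul, mul_one]
        rw [← Finset.mul_sum, hl1, mul_one]
      · rw [Prod.snd_sum]
        have hsnd : ∀ k ∈ t, ((p.1 * lam k) • ((1:ℝ), (z k).1, (z k).2)).2
            = p.1 • (lam k • z k) := by
          intro k hk
          show (p.1 * lam k) • ((z k).1, (z k).2) = p.1 • (lam k • z k)
          rw [Prod.mk.eta, mul_smul]
        rw [Finset.sum_congr rfl hsnd, ← Finset.smul_sum, ← hu', hu]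
    have hμ1 : ∑ k ∈ t, μ k = 1 := by
      have h2 : Lfun E a c c₀ p = 1 := hL
      rw [hdecomp, _root_.map_sum] at h2
      rw [← h2]
      refine Finset.sum_congr rfl fun k hk => ?_
      rw [hkey k hk, _root_.map_smul, smul_eq_mul]
      rw [show (z k).2 = fun e : ↥E => (z k).1 e.val.1 * (z k).1 e.val.2 from
        funext fun e => (hzV k hk).2 e, hLq]
    rw [hdecomp]
    exact (convex_convexHull ℝ GG).sum_mem hμ0 hμ1
      (fun k hk => subset_convexHull ℝ GG (hgGG k hk))
  have hPart1 : convexHull ℝ GG = S :=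
    subset_antisymm (convexHull_min hGsubS hSconv) hSsup
  refine ⟨hPart1, ?_⟩
  ext p
  simp only [Set.mem_setOf_eq]
  constructor
  · intro hpQP
    have hdec := hpQP
    rw [hQP, convexHull_eq] at hdec
    obtain ⟨ι, t, lam, z, hl0, hl1, hzV, hcm⟩ := hdec
    have hp' : p = ∑ k ∈ t, lam k • z k := by
      rw [← hcm, Finset.centerMass_eq_of_sum_1 _ _ hl1]
    set σ := Lfun E a c c₀ ((1:ℝ), p.1, p.2) with hσdef
    have h1p : ((1:ℝ), p.1, p.2) = ∑ k ∈ t, lam k • ((1:ℝ), (z k).1, (z k).2) := by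
      refine Prod.ext ?_ ?_
      · rw [Prod.fst_sum]
        simp only [Prod.smul_fst, smul_eq_mul, mul_one]
        rw [hl1]
      · rw [Prod.snd_sum]
        have hsnd : ∀ k ∈ t, (lam k • ((1:ℝ), (z k).1, (z k).2)).2 = lam k • z k := by
          intro k hk
          show lam k • ((z k).1, (z k).2) = lam k • z k
          rw [Prod.mk.eta]
        rw [Finset.sum_congr rfl hsnd, ← hp']
    have hσ : σ = ∑ k ∈ t, lam k * q ((z k).1) := by
      rw [hσdef, h1p, _root_.map_sum]
      refine Finset.sum_congr rfl fun k hk => ?_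
      rw [_root_.map_smul, smul_eq_mul]
      congr 1
      rw [show (z k).2 = fun e : ↥E => (z k).1 e.val.1 * (z k).1 e.val.2 from
        funext fun e => (hzV k hk).2 e, hLq]
    have hσpos : 0 < σ := by
      rw [hσ]
      have hzb : ∀ k ∈ t, ∀ j, 0 ≤ (z k).1 j ∧ (z k).1 j ≤ 1 := by
        intro k hk j
        rcases (hzV k hk).1 j with h | h <;> simp [h]
      have hex : ∃ k ∈ t, 0 < lam k := by
        by_contra h
        push_neg at h
        have := Finset.sum_nonpos h
        linarith [hl1, this]
      obtain ⟨k0, hk0, hlk0⟩ := hex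
      refine Finset.sum_pos' (fun k hk => mul_nonneg (hl0 k hk) (hqpos _ (hzb k hk)).le)
        ⟨k0, hk0, mul_pos hlk0 (hqpos _ (hzb k0 hk0))⟩
    refine ⟨σ, hσpos, ?_⟩
    rw [hPart1, Set.mem_smul_set]
    refine ⟨σ⁻¹ • ((1:ℝ), p.1, p.2), ⟨?_, ?_, ?_⟩, ?_⟩
    · show (0:ℝ) ≤ (σ⁻¹ • ((1:ℝ), p.1, p.2)).1
      simp only [Prod.smul_fst, smul_eq_mul, mul_one]
      positivity
    · have hcomp : (((σ⁻¹ • ((1:ℝ), p.1, p.2)).2.1), ((σ⁻¹ • ((1:ℝ), p.1, p.2)).2.2))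
          = σ⁻¹ • (p.1, p.2) := by
        refine Prod.ext (by simp) (by simp)
      have hfst1 : (σ⁻¹ • ((1:ℝ), p.1, p.2)).1 = σ⁻¹ := by simp
      rw [hcomp, hfst1]
      exact Set.smul_mem_smul_set (by rw [Prod.mk.eta]; exact hpQP)
    · show Lfun E a c c₀ (σ⁻¹ • ((1:ℝ), p.1, p.2)) = 1
      rw [_root_.map_smul, ← hσdef, smul_eq_mul, inv_mul_cancel₀ hσpos.ne']
    · rw [smul_smul, mul_inv_cancel₀ hσpos.ne', one_smul]
  · rintro ⟨σ, hσpos, hmem⟩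
    rw [hPart1, Set.mem_smul_set] at hmem
    obtain ⟨g, hgS, hg⟩ := hmem
    have hgval : g = σ⁻¹ • ((1:ℝ), p.1, p.2) := by
      rw [← hg, smul_smul, inv_mul_cancel₀ hσpos.ne', one_smul]
    obtain ⟨-, hmemQ, -⟩ := hgS
    rw [hgval] at hmemQ
    have h1 : (σ⁻¹ • ((1:ℝ), p.1, p.2)).1 = σ⁻¹ := by simp
    have h2 : (((σ⁻¹ • ((1:ℝ), p.1, p.2)).2.1), ((σ⁻¹ • ((1:ℝ), p.1, p.2)).2.2))
        = σ⁻¹ • (p.1, p.2) := by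
      refine Prod.ext (by simp) (by simp)
    rw [h1, h2, Set.mem_smul_set] at hmemQ
    obtain ⟨u, huQP, hu⟩ := hmemQ
    have hup : u = (p.1, p.2) :=
      smul_right_injective _ (inv_ne_zero hσpos.ne') hu
    rw [hup, Prod.mk.eta] at huQP
    exact huQP
end

section
/- Let X ⊆ ℝⁿ, let C ∈ ℝ^{m×n} and d ∈ ℝᵐ, and set L = { x ∈ ℝⁿ | Cx = d }. Let A be a symmetric n×n real matrix, a ∈ ℝⁿ, a₀ ∈ ℝ, and q(x) = xᵀAx + aᵀx + a₀. Assume X ∩ L is nonempty and bounded and there exists ε > 0 with q(x) > ε for all x ∈ X ∩ L. Define G = { (1/q(x), x/q(x), xxᵀ/q(x)) | x ∈ X ∩ L } ⊆ ℝ × ℝⁿ × ℝ^{n×n} and F = { (x, xxᵀ) | x ∈ X }. Then conv(G) = { (ρ, y, Y) | ρ > 0, (y, Y) ∈ ρ · conv(F), ⟨A, Y⟩ + ⟨a, y⟩ + a₀ρ = 1, and Tr(C Y Cᵀ − C y dᵀ − d yᵀ Cᵀ + ρ d dᵀ) = 0 }. Moreover, if L = ℝⁿ (i.e., C = 0 and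 d = 0) and X is nonempty and bounded with q(x) > ε on X, then conv(F) = { (x, X̄) | there exists σ > 0 with (1, x, X̄) ∈ σ · conv(G) }. -/
open Pointwise Matrix

section Helpers

variable {n m : ℕ}

private lemma trace_vMv (u v : Fin m → ℝ) :
    Matrix.trace (Matrix.vecMulVec u v) = u ⬝ᵥ v := by
  simp [Matrix.trace, Matrix.vecMulVec_apply, Matrix.diag, dotProduct]

private lemma vMv_smul_left (c : ℝ) (u : Fin m → ℝ) (w : Fin n → ℝ) :
    Matrix.vecMulVec (c • u) w = c • Matrix.vecMulVec u w := by
  ext i j; simp [Matrix.vecMulVec_apply]; ring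

private lemma vMv_smul_right (c : ℝ) (u : Fin m → ℝ) (w : Fin n → ℝ) :
    Matrix.vecMulVec u (c • w) = c • Matrix.vecMulVec u w := by
  ext i j; simp [Matrix.vecMulVec_apply]; ring

private lemma mul_vMv (C : Matrix (Fin m) (Fin n) ℝ) (x : Fin n → ℝ) (y : Fin n → ℝ) :
    C * Matrix.vecMulVec x y = Matrix.vecMulVec (C.mulVec x) y := by
  ext i j; simp [Matrix.mul_apply, Matrix.vecMulVec_apply, Matrix.mulVec, dotProduct,
    Finset.sum_mul, mul_assoc]

private lemma vMv_mul_transpose (C : Matrix (Fin m) (Fin n) ℝ) (u : Fin m → ℝ) (y : Fin n → ℝ) :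
    Matrix.vecMulVec u y * Cᵀ = Matrix.vecMulVec u (C.mulVec y) := by
  ext i j
  simp only [Matrix.mul_apply, Matrix.vecMulVec_apply, Matrix.transpose_apply,
    Matrix.mulVec, dotProduct, Finset.mul_sum]
  exact Finset.sum_congr rfl fun k _ => by ring

private lemma trace_A_vMv (A : Matrix (Fin n) (Fin n) ℝ) (x : Fin n → ℝ) :
    Matrix.trace (A * (Matrix.vecMulVec x x)ᵀ) = x ⬝ᵥ A.mulVec x := by
  simp [Matrix.trace, Matrix.mul_apply, Matrix.vecMulVec_apply, Matrix.diag,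
    dotProduct, Matrix.mulVec, Finset.mul_sum]
  exact Finset.sum_congr rfl fun i _ => Finset.sum_congr rfl fun j _ => by ring

/-- The first linear functional. -/
noncomputable def ell1 (A : Matrix (Fin n) (Fin n) ℝ) (a : Fin n → ℝ) (a₀ : ℝ) :
    (ℝ × (Fin n → ℝ) × Matrix (Fin n) (Fin n) ℝ) →ₗ[ℝ] ℝ where
  toFun p := Matrix.trace (A * (p.2.2)ᵀ) + a ⬝ᵥ p.2.1 + a₀ * p.1
  map_add' p q := by
    simp [Matrix.transpose_add, Matrix.mul_add, Matrix.trace_add, dotProduct_add]; ring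
  map_smul' c p := by
    simp [Matrix.transpose_smul, Matrix.mul_smul, Matrix.trace_smul, dotProduct_smul,
      smul_eq_mul]; ring

/-- The second linear functional. -/
noncomputable def ell2 (C : Matrix (Fin m) (Fin n) ℝ) (d : Fin m → ℝ) :
    (ℝ × (Fin n → ℝ) × Matrix (Fin n) (Fin n) ℝ) →ₗ[ℝ] ℝ where
  toFun p := Matrix.trace (C * p.2.2 * Cᵀ - Matrix.vecMulVec (C.mulVec p.2.1) d
      - Matrix.vecMulVec d (C.mulVec p.2.1) + p.1 • Matrix.vecMulVec d d)
  map_add' p q := by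
    simp only [Prod.fst_add, Prod.snd_add, Matrix.mul_add, Matrix.add_mul,
      Matrix.mulVec_add, vMv_smul_left, vMv_smul_right,
      Matrix.trace_sub, Matrix.trace_add, Matrix.trace_smul, smul_eq_mul, add_smul]
    rw [show Matrix.vecMulVec (C.mulVec p.2.1 + C.mulVec q.2.1) d
        = Matrix.vecMulVec (C.mulVec p.2.1) d + Matrix.vecMulVec (C.mulVec q.2.1) d by
      ext i j; simp [Matrix.vecMulVec_apply]; ring]
    rw [show Matrix.vecMulVec d (C.mulVec p.2.1 + C.mulVec q.2.1)
        = Matrix.vecMulVec d (C.mulVec p.2.1) + Matrix.vecMulVec d (C.mulVec q.2.1) by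
      ext i j; simp [Matrix.vecMulVec_apply]; ring]
    simp [Matrix.trace_add, Matrix.trace_sub]; ring
  map_smul' c p := by
    simp only [Prod.smul_fst, Prod.smul_snd, Matrix.smul_mul, Matrix.mul_smul,
      Matrix.mulVec_smul, vMv_smul_left, vMv_smul_right, smul_eq_mul,
      smul_smul, RingHom.id_apply]
    rw [show (c * p.1) • Matrix.vecMulVec d d = c • (p.1 • Matrix.vecMulVec d d) by
      rw [smul_smul]]
    rw [← smul_sub, ← smul_sub, ← smul_add, Matrix.trace_smul]; simp

lemma ell1_gen (A : Matrix (Fin n) (Fin n) ℝ) (a : Fin n → ℝ) (a₀ : ℝ) (x : Fin n → ℝ) :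
    ell1 A a a₀ ((1:ℝ), x, Matrix.vecMulVec x x)
      = x ⬝ᵥ A.mulVec x + a ⬝ᵥ x + a₀ := by
  simp [ell1, trace_A_vMv]
  simpa using trace_A_vMv A x

lemma ell2_gen (C : Matrix (Fin m) (Fin n) ℝ) (d : Fin m → ℝ) (x : Fin n → ℝ) :
    ell2 C d ((1:ℝ), x, Matrix.vecMulVec x x)
      = (C.mulVec x - d) ⬝ᵥ (C.mulVec x - d) := by
  simp only [ell2, LinearMap.coe_mk, AddHom.coe_mk, mul_vMv, vMv_mul_transpose,
    one_smul, Matrix.trace_add, Matrix.trace_sub, trace_vMv]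
  simp [dotProduct, sub_mul, mul_sub, Finset.sum_sub_distrib]
  ring_nf

/-- Representation of a point of the convex hull of `F`. -/
lemma repr_conv {n : ℕ} (X : Set (Fin n → ℝ))
    (F : Set ((Fin n → ℝ) × Matrix (Fin n) (Fin n) ℝ))
    (hF : F = {p | ∃ x ∈ X, p = (x, Matrix.vecMulVec x x)})
    {u : (Fin n → ℝ) × Matrix (Fin n) (Fin n) ℝ} (hu : u ∈ convexHull ℝ F) :
    ∃ (ι : Type) (t : Finset ι) (w : ι → ℝ) (x : ι → Fin n → ℝ),
      (∀ i ∈ t, 0 ≤ w i) ∧ ∑ i ∈ t, w i = 1 ∧ (∀ i ∈ t, x i ∈ X) ∧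
      ((1:ℝ), u) = ∑ i ∈ t, w i • ((1:ℝ), x i, Matrix.vecMulVec (x i) (x i)) := by
  rw [convexHull_eq] at hu
  obtain ⟨ι, t, w, z, hw0, hw1, hzF, hcm⟩ := hu
  have hz : ∀ i, ∃ v, i ∈ t → v ∈ X ∧ z i = (v, Matrix.vecMulVec v v) := by
    intro i
    by_cases h : i ∈ t
    · have hzi := hzF i h
      rw [hF] at hzi
      obtain ⟨v, hv, hzv⟩ := hzi
      exact ⟨v, fun _ => ⟨hv, hzv⟩⟩
    · exact ⟨0, fun h' => absurd h' h⟩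
  choose x hx using hz
  refine ⟨ι, t, w, x, hw0, hw1, fun i hi => (hx i hi).1, ?_⟩
  have husum : ∑ i ∈ t, w i • z i = u := by
    rw [← Finset.centerMass_eq_of_sum_1 t z hw1]; exact hcm
  refine Prod.ext ?_ ?_
  · simp only [Prod.fst_sum, Prod.smul_fst, smul_eq_mul, mul_one]
    exact hw1.symm
  · show u = (∑ i ∈ t, w i • ((1:ℝ), x i, Matrix.vecMulVec (x i) (x i))).2
    rw [Prod.snd_sum, ← husum]
    exact Finset.sum_congr rfl fun i hi => by rw [(hx i hi).2]; rfl

private lemma vMv_zero_right (u : Fin m → ℝ) :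
    Matrix.vecMulVec u (0 : Fin n → ℝ) = 0 := by
  ext i j; simp [Matrix.vecMulVec_apply]

private lemma vMv_zero_left (u : Fin n → ℝ) :
    Matrix.vecMulVec (0 : Fin m → ℝ) u = 0 := by
  ext i j; simp [Matrix.vecMulVec_apply]

lemma ell2_zero (pt : ℝ × (Fin n → ℝ) × Matrix (Fin n) (Fin n) ℝ) :
    ell2 (0 : Matrix (Fin m) (Fin n) ℝ) (0 : Fin m → ℝ) pt = 0 := by
  simp [ell2, vMv_zero_right, vMv_zero_left]

end Helpers

/-- Proposition 3: convex hull of the quadratic fractional set over X ∩ L. -/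
theorem stmt8 (n m : ℕ) (X : Set (Fin n → ℝ))
    (C : Matrix (Fin m) (Fin n) ℝ) (d : Fin m → ℝ)
    (L : Set (Fin n → ℝ)) (hL : L = {x | C.mulVec x = d})
    (A : Matrix (Fin n) (Fin n) ℝ) (hA : A.IsSymm) (a : Fin n → ℝ) (a₀ : ℝ)
    (q : (Fin n → ℝ) → ℝ) (hq : q = fun x => x ⬝ᵥ A.mulVec x + a ⬝ᵥ x + a₀)
    (hne : (X ∩ L).Nonempty) (hbd : Bornology.IsBounded (X ∩ L))
    (ε : ℝ) (hε : 0 < ε) (hqpos : ∀ x ∈ X ∩ L, ε < q x)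
    (G : Set (ℝ × (Fin n → ℝ) × Matrix (Fin n) (Fin n) ℝ))
    (hG : G = {p | ∃ x ∈ X ∩ L,
        p = ((q x)⁻¹, (q x)⁻¹ • x, (q x)⁻¹ • Matrix.vecMulVec x x)})
    (F : Set ((Fin n → ℝ) × Matrix (Fin n) (Fin n) ℝ))
    (hF : F = {p | ∃ x ∈ X, p = (x, Matrix.vecMulVec x x)}) :
    convexHull ℝ G
      = {p : ℝ × (Fin n → ℝ) × Matrix (Fin n) (Fin n) ℝ |
          0 < p.1 ∧ (p.2.1, p.2.2) ∈ p.1 • convexHull ℝ F ∧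
          Matrix.trace (A * (p.2.2)ᵀ) + a ⬝ᵥ p.2.1 + a₀ * p.1 = 1 ∧
          Matrix.trace (C * p.2.2 * Cᵀ - Matrix.vecMulVec (C.mulVec p.2.1) d
            - Matrix.vecMulVec d (C.mulVec p.2.1) + p.1 • Matrix.vecMulVec d d) = 0} ∧
    ((C = 0 ∧ d = 0 ∧ X.Nonempty ∧ Bornology.IsBounded X ∧ ∀ x ∈ X, ε < q x) →
      convexHull ℝ F = {p : (Fin n → ℝ) × Matrix (Fin n) (Fin n) ℝ |
          ∃ σ > (0 : ℝ), ((1 : ℝ), p.1, p.2) ∈ σ • convexHull ℝ G}) := by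
  classical
  have hgen1 : ∀ x : Fin n → ℝ,
      ell1 A a a₀ ((1:ℝ), x, Matrix.vecMulVec x x) = q x := by
    intro x; rw [ell1_gen, hq]
  -- Part 1
  have key1 : convexHull ℝ G
      = {p : ℝ × (Fin n → ℝ) × Matrix (Fin n) (Fin n) ℝ |
          0 < p.1 ∧ (p.2.1, p.2.2) ∈ p.1 • convexHull ℝ F ∧
          ell1 A a a₀ p = 1 ∧ ell2 C d p = 0} := by
    apply Set.Subset.antisymm
    · apply convexHull_min
      · rintro p hp
        rw [hG] at hp
        obtain ⟨x, hxXL, rfl⟩ := hp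
        have hq0 : 0 < q x := hε.trans (hqpos x hxXL)
        have hqne : q x ≠ 0 := ne_of_gt hq0
        have hrep : ((q x)⁻¹, (q x)⁻¹ • x, (q x)⁻¹ • Matrix.vecMulVec x x)
            = (q x)⁻¹ • ((1:ℝ), x, Matrix.vecMulVec x x) := by
          refine Prod.ext ?_ rfl
          simp
        have hxL : C.mulVec x = d := by
          have := hxXL.2; rwa [hL] at this
        refine ⟨by positivity, ?_, ?_, ?_⟩
        · exact ⟨(x, Matrix.vecMulVec x x),
            subset_convexHull ℝ F (by rw [hF]; exact ⟨x, hxXL.1, rfl⟩), rfl⟩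
        · rw [hrep, _root_.map_smul, hgen1, smul_eq_mul, inv_mul_cancel₀ hqne]
        · rw [hrep, _root_.map_smul, ell2_gen, hxL, sub_self, smul_eq_mul]
          simp [dotProduct]
      · rintro p ⟨hp1, ⟨u, huK, hu⟩, hp3, hp4⟩ r ⟨hr1, ⟨v, hvK, hv⟩, hr3, hr4⟩ α β hα hβ hαβ
        have hγ : 0 < α * p.1 + β * r.1 := by
          rcases eq_or_lt_of_le hα with h|h
          · have hβ1 : β = 1 := by linarith
            rw [← h, hβ1]; simpa using hr1
          · nlinarith [mul_pos h hp1, mul_nonneg hβ hr1.le]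
        refine ⟨hγ, ?_, ?_, ?_⟩
        · refine ⟨(α * p.1 / (α * p.1 + β * r.1)) • u
            + (β * r.1 / (α * p.1 + β * r.1)) • v, ?_, ?_⟩
          · refine (convex_convexHull ℝ F) huK hvK (by positivity) (by positivity) ?_
            field_simp
          · show (α • p + β • r).1 • _ = ((α • p + β • r).2.1, (α • p + β • r).2.2)
            have hne' : α * p.1 + β * r.1 ≠ 0 := ne_of_gt hγ
            have h1 : (α • p + β • r).1 = α * p.1 + β * r.1 := rfl
            rw [h1, smul_add, smul_smul, smul_smul,
              mul_div_cancel₀ _ hne', mul_div_cancel₀ _ hne']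
            have hu' : p.1 • u = p.2 := hu
            have hv' : r.1 • v = r.2 := hv
            show _ = (α • p + β • r).2
            rw [Prod.snd_add, Prod.smul_snd, Prod.smul_snd, ← hu', ← hv',
              smul_smul, smul_smul]
        · rw [map_add, _root_.map_smul, _root_.map_smul, hp3, hr3, smul_eq_mul, smul_eq_mul,
            mul_one, mul_one, hαβ]
        · rw [map_add, _root_.map_smul, _root_.map_smul, hp4, hr4, smul_eq_mul, smul_eq_mul,
            mul_zero, mul_zero, add_zero]
    · rintro p ⟨hp1, hpm, hp3, hp4⟩
      obtain ⟨u, huK, hu⟩ := hpm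
      have hu' : p.1 • u = p.2 := hu
      obtain ⟨ι, t, w, x, hw0, hw1, hxX, hrep⟩ := repr_conv X F hF huK
      have hpne : p.1 ≠ 0 := ne_of_gt hp1
      have hpeq : p = p.1 • ((1:ℝ), u) := by
        refine Prod.ext ?_ ?_
        · simp
        · exact hu'.symm
      -- evaluate any linear functional on p
      have hval : ∀ l : (ℝ × (Fin n → ℝ) × Matrix (Fin n) (Fin n) ℝ) →ₗ[ℝ] ℝ,
          l p = ∑ i ∈ t, p.1 * w i * l ((1:ℝ), x i, Matrix.vecMulVec (x i) (x i)) := by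
        intro l
        conv_lhs => rw [hpeq]
        rw [_root_.map_smul, show ((1:ℝ), u) = ((1:ℝ), u.1, u.2) from rfl, ← Prod.mk.eta (p := u), hrep]
        rw [map_sum, smul_eq_mul, Finset.mul_sum]
        refine Finset.sum_congr rfl fun i hi => ?_
        rw [_root_.map_smul, smul_eq_mul, mul_assoc]
      have h1sum : ∑ i ∈ t, p.1 * w i * q (x i) = 1 := by
        have h := hval (ell1 A a a₀)
        rw [hp3] at h
        calc ∑ i ∈ t, p.1 * w i * q (x i)
            = ∑ i ∈ t, p.1 * w i * (ell1 A a a₀) ((1:ℝ), x i, Matrix.vecMulVec (x i) (x i)) :=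
              Finset.sum_congr rfl fun i hi => by rw [hgen1]
          _ = 1 := h.symm
      -- the L-constraint forces C x i = d for positive weights
      have hsq : ∀ i ∈ t, w i ≠ 0 → C.mulVec (x i) = d := by
        have h0 : ∑ i ∈ t, w i * ((C.mulVec (x i) - d) ⬝ᵥ (C.mulVec (x i) - d)) = 0 := by
          have h := hval (ell2 C d)
          rw [hp4] at h
          have h2 : ∑ i ∈ t, p.1 * w i * ((C.mulVec (x i) - d) ⬝ᵥ (C.mulVec (x i) - d)) = 0 := by
            calc ∑ i ∈ t, p.1 * w i * ((C.mulVec (x i) - d) ⬝ᵥ (C.mulVec (x i) - d))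
                = ∑ i ∈ t, p.1 * w i * (ell2 C d) ((1:ℝ), x i, Matrix.vecMulVec (x i) (x i)) :=
                  Finset.sum_congr rfl fun i hi => by rw [ell2_gen]
              _ = 0 := h.symm
          have h3 : p.1 * ∑ i ∈ t, w i * ((C.mulVec (x i) - d) ⬝ᵥ (C.mulVec (x i) - d)) = 0 := by
            rw [Finset.mul_sum, ← h2]
            exact Finset.sum_congr rfl fun i hi => by ring
          exact (mul_eq_zero.mp h3).resolve_left hpne
        have hnn : ∀ i ∈ t, 0 ≤ w i * ((C.mulVec (x i) - d) ⬝ᵥ (C.mulVec (x i) - d)) := by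
          intro i hi
          exact mul_nonneg (hw0 i hi) (Finset.sum_nonneg fun j _ => mul_self_nonneg _)
        intro i hi hwi
        have := (Finset.sum_eq_zero_iff_of_nonneg hnn).mp h0 i hi
        have hdp : (C.mulVec (x i) - d) ⬝ᵥ (C.mulVec (x i) - d) = 0 :=
          (mul_eq_zero.mp this).resolve_left hwi
        have := dotProduct_self_eq_zero.mp hdp
        exact sub_eq_zero.mp this
      -- reassemble as a convex combination of points of G
      set t' : Finset ι := t.filter (fun i => w i ≠ 0) with ht'
      set μ : ι → ℝ := fun i => p.1 * w i * q (x i) with hμdef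
      have hmem' : ∀ i ∈ t', i ∈ t ∧ w i ≠ 0 := fun i hi => Finset.mem_filter.mp hi
      have hxXL : ∀ i ∈ t', x i ∈ X ∩ L := by
        intro i hi
        obtain ⟨hit, hwi⟩ := hmem' i hi
        exact ⟨hxX i hit, by rw [hL]; exact hsq i hit hwi⟩
      have hq0 : ∀ i ∈ t', 0 < q (x i) := fun i hi => hε.trans (hqpos _ (hxXL i hi))
      have hμ0 : ∀ i ∈ t', 0 ≤ μ i := fun i hi =>
        mul_nonneg (mul_nonneg hp1.le (hw0 i (hmem' i hi).1)) (hq0 i hi).le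
      have hμsum : ∑ i ∈ t', μ i = 1 := by
        rw [ht', Finset.sum_filter_of_ne (fun i hi hne' => ?_), ← h1sum]
        intro hwi
        exact hne' (by rw [hμdef]; simp [hwi])
      set g : ι → ℝ × (Fin n → ℝ) × Matrix (Fin n) (Fin n) ℝ :=
        fun i => ((q (x i))⁻¹, (q (x i))⁻¹ • x i,
          (q (x i))⁻¹ • Matrix.vecMulVec (x i) (x i)) with hgdef
      have hgG : ∀ i ∈ t', g i ∈ G := by
        intro i hi
        rw [hG]
        exact ⟨x i, hxXL i hi, rfl⟩
      have hfin : ∑ i ∈ t', μ i • g i = p := by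
        have hstep : ∀ i ∈ t', μ i • g i = (p.1 * w i) • ((1:ℝ), x i, Matrix.vecMulVec (x i) (x i)) := by
          intro i hi
          have hgi : g i = (q (x i))⁻¹ • ((1:ℝ), x i, Matrix.vecMulVec (x i) (x i)) := by
            refine Prod.ext ?_ rfl
            simp [hgdef]
          rw [hgi, smul_smul, hμdef]
          congr 1
          rw [mul_assoc, mul_inv_cancel₀ (ne_of_gt (hq0 i hi)), mul_one]
        rw [Finset.sum_congr rfl hstep, ht',
          Finset.sum_filter_of_ne (fun i hi hne' => ?_)]
        · conv_rhs => rw [hpeq, show ((1:ℝ), u) = ((1:ℝ), u.1, u.2) from rfl,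
            ← Prod.mk.eta (p := u), hrep]
          rw [Finset.smul_sum]
          exact Finset.sum_congr rfl fun i hi => by rw [smul_smul]
        · intro hwi
          exact hne' (by simp [hwi])
      have := Finset.centerMass_mem_convexHull t' hμ0 (by rw [hμsum]; norm_num)
        (fun i hi => hgG i hi)
      rwa [Finset.centerMass_eq_of_sum_1 _ _ hμsum, hfin] at this
  refine ⟨key1, ?_⟩
  rintro ⟨hC, hd, hXne, hXbd, hqX⟩
  ext p
  simp only [Set.mem_setOf_eq]
  constructor
  · intro hp
    obtain ⟨ι, t, w, x, hw0, hw1, hxX, hrep⟩ := repr_conv X F hF hp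
    set σ : ℝ := ∑ i ∈ t, w i * q (x i) with hσdef
    have hσpos : 0 < σ := by
      have hle : ε = ∑ i ∈ t, w i * ε := by rw [← Finset.sum_mul, hw1, one_mul]
      have hεσ : ε ≤ σ := by
        rw [hle, hσdef]
        exact Finset.sum_le_sum fun i hi =>
          mul_le_mul_of_nonneg_left (hqX _ (hxX i hi)).le (hw0 i hi)
      linarith
    have hσne : σ ≠ 0 := ne_of_gt hσpos
    refine ⟨σ, hσpos, ?_⟩
    have hv1 : ell1 A a a₀ ((1:ℝ), p) = σ := by
      rw [hrep, map_sum, hσdef]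
      exact Finset.sum_congr rfl fun i hi => by
        rw [_root_.map_smul, smul_eq_mul, hgen1]
    have hmem : ((σ⁻¹ : ℝ), σ⁻¹ • p.1, σ⁻¹ • p.2) ∈ convexHull ℝ G := by
      rw [key1]
      have hsm : ((σ⁻¹ : ℝ), σ⁻¹ • p.1, σ⁻¹ • p.2) = σ⁻¹ • ((1:ℝ), p.1, p.2) := by
        refine Prod.ext ?_ rfl
        simp
      refine ⟨by positivity, ?_, ?_, ?_⟩
      · exact ⟨(p.1, p.2), by rw [Prod.mk.eta]; exact hp, rfl⟩
      · rw [hsm, _root_.map_smul, show ((1:ℝ), p.1, p.2) = ((1:ℝ), p) from by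
          rw [Prod.mk.eta], hv1, smul_eq_mul, inv_mul_cancel₀ hσne]
      · rw [hC, hd]
        exact ell2_zero _
    have heq : ((1:ℝ), p.1, p.2) = σ • ((σ⁻¹ : ℝ), σ⁻¹ • p.1, σ⁻¹ • p.2) := by
      refine Prod.ext ?_ ?_
      · simp [mul_inv_cancel₀ hσne]
      · show (p.1, p.2) = σ • (σ⁻¹ • p.1, σ⁻¹ • p.2)
        refine Prod.ext ?_ ?_ <;>
          simp [smul_smul, mul_inv_cancel₀ hσne]
    rw [heq]
    exact Set.smul_mem_smul_set hmem
  · rintro ⟨σ, hσpos, hmem⟩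
    have hσne : σ ≠ 0 := ne_of_gt hσpos
    obtain ⟨v, hvG, hv⟩ := hmem
    have hv' : σ • v = ((1:ℝ), p.1, p.2) := hv
    have hveq : v = ((σ⁻¹ : ℝ), σ⁻¹ • p.1, σ⁻¹ • p.2) := by
      calc v = σ⁻¹ • (σ • v) := by rw [smul_smul, inv_mul_cancel₀ hσne, one_smul]
        _ = σ⁻¹ • ((1:ℝ), p.1, p.2) := by rw [hv']
        _ = ((σ⁻¹ : ℝ), σ⁻¹ • p.1, σ⁻¹ • p.2) := by refine Prod.ext ?_ rfl; simp
    rw [key1] at hvG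
    obtain ⟨-, h2, -, -⟩ := hvG
    rw [hveq] at h2
    obtain ⟨z, hzF, hzeq⟩ := h2
    have hzeq' : σ⁻¹ • z = σ⁻¹ • (p.1, p.2) := hzeq
    have hz : z = (p.1, p.2) :=
      smul_right_injective _ (inv_ne_zero hσne) hzeq'
    rw [← Prod.mk.eta (p := p), ← hz]
    exact hzF
end

section
/- Let p, q be natural numbers and let X ⊆ ℝ be a nonempty compact set with x^p > 0 for every x ∈ X. Define the moment curve M_{p+q} = { (1, x, x², …, x^{p+q}) | x ∈ X } ⊆ ℝ^{p+q+1} and G_{p,q} = { (x^{−p}, x^{−p+1}, …, x^{−1}, 1, x, …, x^{q}) | x ∈ X } ⊆ ℝ^{p+q+1} (coordinates indexed 0 through p+q, so coordinate j of a point of G_{p,q} is x^{j−p}). Then conv(G_{p,q}) = { ν = (ν₀, …, ν_{p+q}) | ν ∈ cone(M_{p+q}) and ν_p = 1 } and conv(M_{p+q}) = { μ = (μ₀, …, μ_{p+q}) | μ ∈ cone(G_{p,q}) and μ₀ = 1 }. -/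
/-- The conic hull of a set: all finite nonnegative linear combinations of its
elements (contains the origin). -/
def coneHull {d : ℕ} (S : Set (Fin d → ℝ)) : Set (Fin d → ℝ) :=
  {v | ∃ (k : ℕ) (lam : Fin k → ℝ) (s : Fin k → (Fin d → ℝ)),
    (∀ i, 0 ≤ lam i) ∧ (∀ i, s i ∈ S) ∧ v = ∑ i, lam i • s i}

lemma sum_mem_coneHull {d : ℕ} {S : Set (Fin d → ℝ)} {ι : Type*} [Fintype ι]
    (w : ι → ℝ) (z : ι → Fin d → ℝ) (hw : ∀ i, 0 ≤ w i) (hz : ∀ i, z i ∈ S) :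
    ∑ i, w i • z i ∈ coneHull S := by
  let e := Fintype.equivFin ι
  exact ⟨Fintype.card ι, fun i => w (e.symm i), fun i => z (e.symm i),
    fun i => hw _, fun i => hz _, (Equiv.sum_comp e.symm fun i => w i • z i).symm⟩

lemma hull_eq_cone_inter {d : ℕ} (A B : Set (Fin d → ℝ)) (idx : Fin d)
    (hA1 : ∀ a ∈ A, a idx = 1)
    (hAB : ∀ a ∈ A, ∃ c : ℝ, ∃ b ∈ B, 0 ≤ c ∧ a = c • b)
    (hBA : ∀ b ∈ B, ∃ c : ℝ, ∃ a ∈ A, 0 ≤ c ∧ b = c • a) :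
    convexHull ℝ A = {ν | ν ∈ coneHull B ∧ ν idx = 1} := by
  ext ν
  constructor
  · intro hν
    rw [convexHull_eq] at hν
    obtain ⟨ι, t, w, z, hw0, hw1, hzA, hcm⟩ := hν
    have hν' : ν = ∑ i ∈ t, w i • z i := by
      rw [← hcm, Finset.centerMass_eq_of_sum_1 _ _ hw1]
    choose c b hb hc0 hab using fun a : {i // i ∈ t} => hAB (z a) (hzA a a.2)
    refine ⟨?_, ?_⟩
    · have hrw : ν = ∑ a : {i // i ∈ t}, (w a * c a) • b a := by
        rw [hν', ← Finset.sum_attach t fun i => w i • z i, Finset.attach_eq_univ]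
        exact Finset.sum_congr rfl fun a _ => by rw [hab a, smul_smul]
      rw [hrw]
      exact sum_mem_coneHull _ _ (fun a => mul_nonneg (hw0 a a.2) (hc0 a)) fun a => hb a
    · rw [hν']
      simp only [Finset.sum_apply, Pi.smul_apply, smul_eq_mul]
      rw [Finset.sum_congr rfl fun i hi => by rw [hA1 (z i) (hzA i hi), mul_one]]
      exact hw1
  · rintro ⟨⟨k, lam, s, hlam, hsB, hsum⟩, hidx⟩
    choose c a ha hc0 hca using fun i : Fin k => hBA (s i) (hsB i)
    have hν : ν = ∑ i, (lam i * c i) • a i := by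
      rw [hsum]
      exact Finset.sum_congr rfl fun i _ => by rw [hca i, smul_smul]
    have hwsum : ∑ i, lam i * c i = 1 := by
      have h2 : ν idx = ∑ i, lam i * c i := by
        rw [hν]; simp only [Finset.sum_apply, Pi.smul_apply, smul_eq_mul]
        exact Finset.sum_congr rfl fun i _ => by rw [hA1 (a i) (ha i), mul_one]
      rw [← h2, hidx]
    rw [convexHull_eq]
    exact ⟨Fin k, Finset.univ, fun i => lam i * c i, a,
      fun i _ => mul_nonneg (hlam i) (hc0 i), hwsum, fun i _ => ha i,
      by rw [Finset.centerMass_eq_of_sum_1 _ _ hwsum]; exact hν.symm⟩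

/-- Corollary 4: convex hulls of the fractional-power curve and the moment curve
determine each other through their conic hulls. -/
theorem stmt10 (p q : ℕ) (X : Set ℝ) (hXne : X.Nonempty) (hXcpt : IsCompact X)
    (hpos : ∀ x ∈ X, 0 < x ^ p)
    (M Gpq : Set (Fin (p + q + 1) → ℝ))
    (hM : M = {v | ∃ x ∈ X, v = fun j : Fin (p + q + 1) => x ^ (j : ℕ)})
    (hG : Gpq = {v | ∃ x ∈ X,
        v = fun j : Fin (p + q + 1) => x ^ (((j : ℕ) : ℤ) - (p : ℤ))}) :
    convexHull ℝ Gpq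
      = {ν : Fin (p + q + 1) → ℝ | ν ∈ coneHull M ∧ ν ⟨p, by omega⟩ = 1} ∧
    convexHull ℝ M
      = {μ : Fin (p + q + 1) → ℝ | μ ∈ coneHull Gpq ∧ μ ⟨0, by omega⟩ = 1} := by
  subst hM hG
  have key : ∀ x ∈ X, ∀ j : Fin (p + q + 1),
      x ^ (((j : ℕ) : ℤ) - (p : ℤ)) = (x ^ p)⁻¹ * x ^ (j : ℕ) := by
    intro x hx j
    rcases Nat.eq_zero_or_pos p with hp | hp
    · subst hp; simp [zpow_natCast]
    · have hx0 : x ≠ 0 := by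
        intro h
        have := hpos x hx
        rw [h, zero_pow hp.ne'] at this
        exact lt_irrefl 0 this
      rw [zpow_sub₀ hx0, zpow_natCast, zpow_natCast, div_eq_inv_mul]
  constructor
  · apply hull_eq_cone_inter
    · rintro a ⟨x, hx, rfl⟩
      show x ^ (((p : ℕ) : ℤ) - (p : ℤ)) = 1
      simp
    · rintro a ⟨x, hx, rfl⟩
      refine ⟨(x ^ p)⁻¹, _, ⟨x, hx, rfl⟩, inv_nonneg.2 (hpos x hx).le, funext fun j => ?_⟩
      rw [Pi.smul_apply, smul_eq_mul, key x hx j]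
    · rintro b ⟨x, hx, rfl⟩
      refine ⟨x ^ p, _, ⟨x, hx, rfl⟩, (hpos x hx).le, funext fun j => ?_⟩
      rw [Pi.smul_apply, smul_eq_mul, key x hx j, ← mul_assoc,
        mul_inv_cancel₀ (hpos x hx).ne', one_mul]
  · apply hull_eq_cone_inter
    · rintro a ⟨x, hx, rfl⟩
      show x ^ (0 : ℕ) = 1
      simp
    · rintro a ⟨x, hx, rfl⟩
      refine ⟨x ^ p, _, ⟨x, hx, rfl⟩, (hpos x hx).le, funext fun j => ?_⟩
      rw [Pi.smul_apply, smul_eq_mul, key x hx j, ← mul_assoc,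
        mul_inv_cancel₀ (hpos x hx).ne', one_mul]
    · rintro b ⟨x, hx, rfl⟩
      refine ⟨(x ^ p)⁻¹, _, ⟨x, hx, rfl⟩, inv_nonneg.2 (hpos x hx).le, funext fun j => ?_⟩
      rw [Pi.smul_apply, smul_eq_mul, key x hx j]
end

section
/- Let n ≥ 1, let r₀, r₁, …, r_n be distinct real numbers, and let X ⊆ ℝ be a nonempty compact set with ∏_{i=1}^{n} (x − r_i) > 0 for every x ∈ X. Define f₀(x) = ∏_{j=1}^{n}(x − r_j); for i ∈ {1,…,n}, f_i(x) = ∏_{j∈{1,…,n}, j≠i}(x − r_j); f_{n+1}(x) = ∏_{j=0}^{n}(x − r_j); G = { (1, 1/(x − r₁), …, 1/(x − r_n), x − r₀) | x ∈ X } ⊆ ℝ^{n+2}; and M_{n+1} = { (1, x, x², …, x^{n+1}) | x ∈ X } ⊆ ℝ^{n+2}. Then for every invertible real (n+2)×(n+2) matrix T satisfying T · (f₀(x), …, f_{n+1}(x))ᵀ = (1, x, …, x^{n+1})ᵀ for all x ∈ ℝ, one has conv(G) = { ν = (ν₀, …, ν_{n+1}) ∈ ℝ^{n+2} | Tν ∈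 cone(M_{n+1}) and ν₀ = 1 } and conv(M_{n+1}) = { μ = (μ₀, …, μ_{n+1}) ∈ ℝ^{n+2} | T^{−1}μ ∈ cone(G) and μ₀ = 1 }. -/
namespace Stmt12Aux

variable {d : ℕ}

lemma mem_coneHull_of_mem {S : Set (Fin d → ℝ)} {s} (hs : s ∈ S) : s ∈ coneHull S :=
  ⟨1, fun _ => 1, fun _ => s, fun _ => zero_le_one, fun _ => hs, by simp⟩

lemma smul_mem_coneHull {S : Set (Fin d → ℝ)} {v} (hv : v ∈ coneHull S) {c : ℝ} (hc : 0 ≤ c) :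
    c • v ∈ coneHull S := by
  obtain ⟨k, lam, s, h1, h2, rfl⟩ := hv
  refine ⟨k, fun i => c * lam i, s, fun i => mul_nonneg hc (h1 i), h2, ?_⟩
  rw [Finset.smul_sum]
  simp [mul_smul]

lemma add_mem_coneHull {S : Set (Fin d → ℝ)} {v w} (hv : v ∈ coneHull S) (hw : w ∈ coneHull S) :
    v + w ∈ coneHull S := by
  obtain ⟨k, lam, s, h1, h2, rfl⟩ := hv
  obtain ⟨k', lam', s', h1', h2', rfl⟩ := hw
  refine ⟨k + k', Fin.append lam lam', Fin.append s s', ?_, ?_, ?_⟩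
  · intro i
    refine Fin.addCases (fun j => ?_) (fun j => ?_) i
    · simpa [Fin.append_left] using h1 j
    · simpa [Fin.append_right] using h1' j
  · intro i
    refine Fin.addCases (fun j => ?_) (fun j => ?_) i
    · simpa [Fin.append_left] using h2 j
    · simpa [Fin.append_right] using h2' j
  · rw [Fin.sum_univ_add]
    simp [Fin.append_left, Fin.append_right]

lemma convex_coneHull (S : Set (Fin d → ℝ)) : Convex ℝ (coneHull S) :=
  fun _ hu _ hv a b ha hb _ =>
    add_mem_coneHull (smul_mem_coneHull hu ha) (smul_mem_coneHull hv hb)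

lemma conv_eq_coneHull_inter {S : Set (Fin d → ℝ)} (i0 : Fin d) (hS : ∀ v ∈ S, v i0 = 1) :
    convexHull ℝ S = {v | v ∈ coneHull S ∧ v i0 = 1} := by
  apply subset_antisymm
  · apply convexHull_min
    · intro s hs
      exact ⟨mem_coneHull_of_mem hs, hS s hs⟩
    · have : {v : Fin d → ℝ | v ∈ coneHull S ∧ v i0 = 1}
          = coneHull S ∩ {v | v i0 = 1} := rfl
      rw [this]
      refine (convex_coneHull S).inter ?_
      intro u hu v hv a b ha hb hab
      simp only [Set.mem_setOf_eq] at hu hv ⊢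
      simp [hu, hv, hab]
  · rintro v ⟨⟨k, lam, s, h1, h2, rfl⟩, hv0⟩
    have hsum : ∑ i, lam i = 1 := by
      have h := hv0
      simp only [Finset.sum_apply, Pi.smul_apply, smul_eq_mul] at h
      calc ∑ i, lam i = ∑ i, lam i * s i i0 := by
            refine Finset.sum_congr rfl fun i _ => ?_
            rw [hS (s i) (h2 i), mul_one]
        _ = 1 := h
    have hc := Finset.centerMass_mem_convexHull (t := Finset.univ) (w := lam) (z := s)
      (fun i _ => h1 i) (by rw [hsum]; norm_num) (fun i _ => h2 i)
    rwa [Finset.centerMass, hsum, inv_one, one_smul] at hc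

lemma map_coneHull (L : (Fin d → ℝ) →ₗ[ℝ] (Fin d → ℝ)) {S S' : Set (Fin d → ℝ)}
    (h : ∀ s ∈ S, ∃ c : ℝ, 0 ≤ c ∧ ∃ s' ∈ S', L s = c • s') :
    ∀ v ∈ coneHull S, L v ∈ coneHull S' := by
  rintro v ⟨k, lam, s, h1, h2, rfl⟩
  choose c hc s' hs' hL using fun i => h (s i) (h2 i)
  refine ⟨k, fun i => lam i * c i, s', fun i => mul_nonneg (h1 i) (hc i), hs', ?_⟩
  rw [map_sum]
  refine Finset.sum_congr rfl fun i _ => ?_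
  rw [map_smul, hL, smul_smul]

end Stmt12Aux

/-- Proposition 4: the convex hull of the set of inverses of univariate linear forms
is isomorphic, via the change-of-basis matrix T, to the moment hull. -/
theorem stmt12 (n : ℕ) (hn : 1 ≤ n) (r : ℕ → ℝ)
    (hr : ∀ i ≤ n, ∀ j ≤ n, r i = r j → i = j)
    (X : Set ℝ) (hXne : X.Nonempty) (hXcpt : IsCompact X)
    (hpos : ∀ x ∈ X, 0 < ∏ i ∈ Finset.Icc 1 n, (x - r i))
    (f : ℕ → ℝ → ℝ)
    (hf0 : ∀ x, f 0 x = ∏ j ∈ Finset.Icc 1 n, (x - r j))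
    (hfi : ∀ i, 1 ≤ i → i ≤ n → ∀ x, f i x = ∏ j ∈ (Finset.Icc 1 n).erase i, (x - r j))
    (hfn1 : ∀ x, f (n + 1) x = ∏ j ∈ Finset.Icc 0 n, (x - r j))
    (G M : Set (Fin (n + 2) → ℝ))
    (hG : G = {v | ∃ x ∈ X, v = fun i : Fin (n + 2) =>
        if (i : ℕ) = 0 then 1 else if (i : ℕ) = n + 1 then x - r 0 else (x - r (i : ℕ))⁻¹})
    (hM : M = {v | ∃ x ∈ X, v = fun i : Fin (n + 2) => x ^ (i : ℕ)})
    (T : Matrix (Fin (n + 2)) (Fin (n + 2)) ℝ) (hT : IsUnit T)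
    (hTf : ∀ x : ℝ, T.mulVec (fun i : Fin (n + 2) => f (i : ℕ) x)
        = fun i : Fin (n + 2) => x ^ (i : ℕ)) :
    convexHull ℝ G = {ν : Fin (n + 2) → ℝ | T.mulVec ν ∈ coneHull M ∧ ν 0 = 1} ∧
    convexHull ℝ M = {μ : Fin (n + 2) → ℝ | T⁻¹.mulVec μ ∈ coneHull G ∧ μ 0 = 1} := by
  classical
  -- notation for the parametrizing maps
  set g : ℝ → (Fin (n + 2) → ℝ) := fun x => fun i : Fin (n + 2) =>
      if (i : ℕ) = 0 then 1 else if (i : ℕ) = n + 1 then x - r 0 else (x - r (i : ℕ))⁻¹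
    with hg
  set m : ℝ → (Fin (n + 2) → ℝ) := fun x => fun i : Fin (n + 2) => x ^ (i : ℕ) with hm
  have hdet : IsUnit T.det := (Matrix.isUnit_iff_isUnit_det T).mp hT
  have hTinvT : ∀ w : Fin (n + 2) → ℝ, T⁻¹.mulVec (T.mulVec w) = w := by
    intro w
    rw [Matrix.mulVec_mulVec, Matrix.nonsing_inv_mul T hdet, Matrix.one_mulVec]
  have hTTinv : ∀ w : Fin (n + 2) → ℝ, T.mulVec (T⁻¹.mulVec w) = w := by
    intro w
    rw [Matrix.mulVec_mulVec, Matrix.mul_nonsing_inv T hdet, Matrix.one_mulVec]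
  -- Key pointwise identities
  have hkey : ∀ x ∈ X, T.mulVec (g x) = (f 0 x)⁻¹ • m x := by
    intro x hx
    have hP : 0 < ∏ j ∈ Finset.Icc 1 n, (x - r j) := hpos x hx
    have hPne : (∏ j ∈ Finset.Icc 1 n, (x - r j)) ≠ 0 := ne_of_gt hP
    have hfac : ∀ j ∈ Finset.Icc 1 n, x - r j ≠ 0 := by
      intro j hj
      exact Finset.prod_ne_zero_iff.mp hPne j hj
    have hf0ne : f 0 x ≠ 0 := by rw [hf0]; exact hPne
    have hgx : g x = (f 0 x)⁻¹ • fun i : Fin (n + 2) => f (i : ℕ) x := by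
      funext i
      simp only [hg, Pi.smul_apply, smul_eq_mul]
      by_cases h0 : (i : ℕ) = 0
      · rw [if_pos h0, h0, inv_mul_cancel₀ hf0ne]
      · rw [if_neg h0]
        by_cases h1 : (i : ℕ) = n + 1
        · rw [if_pos h1, h1, hfn1, hf0]
          have hmem : 0 ∈ Finset.Icc 0 n := by simp
          have herase : (Finset.Icc 0 n).erase 0 = Finset.Icc 1 n := by
            ext j; simp [Finset.mem_erase, Finset.mem_Icc]; omega
          rw [← Finset.mul_prod_erase _ _ hmem, herase,
            mul_comm (∏ j ∈ Finset.Icc 1 n, (x - r j))⁻¹, mul_assoc,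
            mul_inv_cancel₀ hPne, mul_one]
        · rw [if_neg h1]
          have hi1 : 1 ≤ (i : ℕ) := by omega
          have hin : (i : ℕ) ≤ n := by have := i.isLt; omega
          have hmem : (i : ℕ) ∈ Finset.Icc 1 n := Finset.mem_Icc.mpr ⟨hi1, hin⟩
          have hQ : f 0 x = (x - r i) * ∏ j ∈ (Finset.Icc 1 n).erase (i : ℕ), (x - r j) := by
            rw [hf0]; exact (Finset.mul_prod_erase _ _ hmem).symm
          have hQne : (∏ j ∈ (Finset.Icc 1 n).erase (i : ℕ), (x - r j)) ≠ 0 := by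
            intro h
            apply hf0ne
            rw [hQ, h, mul_zero]
          have hxri : x - r i ≠ 0 := hfac _ hmem
          rw [hfi (i : ℕ) hi1 hin, hQ]
          field_simp
    rw [hgx, Matrix.mulVec_smul, hTf x, hm]
  have hkey' : ∀ x ∈ X, T⁻¹.mulVec (m x) = (f 0 x) • g x := by
    intro x hx
    have hf0ne : f 0 x ≠ 0 := by rw [hf0]; exact ne_of_gt (hpos x hx)
    have : m x = T.mulVec (f 0 x • g x) := by
      rw [Matrix.mulVec_smul, hkey x hx, smul_smul, mul_inv_cancel₀ hf0ne, one_smul]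
    rw [this, hTinvT]
  -- cone hull correspondence
  have coneGM : ∀ ν, ν ∈ coneHull G ↔ T.mulVec ν ∈ coneHull M := by
    intro ν
    constructor
    · intro hν
      have := Stmt12Aux.map_coneHull T.mulVecLin (S := G) (S' := M) ?_ ν hν
      · simpa using this
      · rintro s hs
        rw [hG] at hs
        obtain ⟨x, hx, rfl⟩ := hs
        refine ⟨(f 0 x)⁻¹, ?_, m x, ?_, ?_⟩
        · have := hpos x hx
          rw [hf0]
          positivity
        · rw [hM]; exact ⟨x, hx, rfl⟩
        · exact hkey x hx
    · intro hν
      have := Stmt12Aux.map_coneHull T⁻¹.mulVecLin (S := M) (S' := G) ?_ _ hν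
      · simpa [hTinvT ν] using this
      · rintro s hs
        rw [hM] at hs
        obtain ⟨x, hx, rfl⟩ := hs
        refine ⟨f 0 x, ?_, g x, ?_, ?_⟩
        · rw [hf0]; exact le_of_lt (hpos x hx)
        · rw [hG]; exact ⟨x, hx, rfl⟩
        · simpa using hkey' x hx
  have hG0 : ∀ v ∈ G, v 0 = 1 := by
    intro v hv
    rw [hG] at hv
    obtain ⟨x, hx, rfl⟩ := hv
    simp
  have hM0 : ∀ v ∈ M, v 0 = 1 := by
    intro v hv
    rw [hM] at hv
    obtain ⟨x, hx, rfl⟩ := hv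
    simp
  constructor
  · rw [Stmt12Aux.conv_eq_coneHull_inter (0 : Fin (n + 2)) hG0]
    ext ν
    simp only [Set.mem_setOf_eq]
    rw [coneGM]
  · rw [Stmt12Aux.conv_eq_coneHull_inter (0 : Fin (n + 2)) hM0]
    ext μ
    simp only [Set.mem_setOf_eq]
    constructor
    · rintro ⟨hμ, h0⟩
      refine ⟨?_, h0⟩
      rw [← hTTinv μ] at hμ
      exact (coneGM _).mpr hμ
    · rintro ⟨hμ, h0⟩
      refine ⟨?_, h0⟩
      have := (coneGM _).mp hμ
      rwa [hTTinv μ] at this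
end

section
/- Let m, n ≥ 1, let X ⊆ {0,1}ⁿ be nonempty, and for each i ∈ {1,…,m} let a_{i0} ∈ ℝ and a_i ∈ ℝⁿ satisfy a_{i0} + a_iᵀx > 0 for all x ∈ X. Define G^n ⊆ ℝᵐ × (ℝⁿ)ᵐ × ℝ^{2ⁿ−1} as the set of all (ρ, y, u) for which there exists x ∈ X with ρ^i = 1/(a_{i0} + a_iᵀx) and y^i = x/(a_{i0} + a_iᵀx) for every i ∈ {1,…,m}, and u_S = ∏_{j∈S} x_j for every nonempty S ⊆ {1,…,n}. For each i, let G^n_i denote the projection of G^n onto the coordinates (ρ^i, y^i, u). Then conv(G^n) = { (ρ, y, u) | (ρ^i, y^i, u) ∈ conv(G^n_i) for every i ∈ {1,…,m} }. -/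
open Matrix

private lemma weights_unique {n : ℕ} (t : Finset (Fin n → ℝ))
    (h01 : ∀ x ∈ t, ∀ j, x j = 0 ∨ x j = 1)
    (c : (Fin n → ℝ) → ℝ)
    (h0 : ∑ x ∈ t, c x = 0)
    (hS : ∀ S : Finset (Fin n), S.Nonempty → ∑ x ∈ t, c x * ∏ j ∈ S, x j = 0) :
    ∀ x ∈ t, c x = 0 := by
  classical
  set T : (Fin n → ℝ) → Finset (Fin n) := fun x => Finset.univ.filter (fun j => x j = 1) with hT
  have prod01 : ∀ x ∈ t, ∀ S : Finset (Fin n),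
      (∏ j ∈ S, x j) = if S ⊆ T x then 1 else 0 := by
    intro x hx S
    by_cases h : S ⊆ T x
    · rw [if_pos h]
      apply Finset.prod_eq_one
      intro j hj
      have := h hj
      simpa [hT] using this
    · rw [if_neg h]
      obtain ⟨j, hjS, hjT⟩ := Finset.not_subset.mp h
      apply Finset.prod_eq_zero hjS
      rcases h01 x hx j with h1 | h1
      · exact h1
      · exact absurd (by simp [hT, h1]) hjT
  have hFilt : ∀ S : Finset (Fin n), ∑ x ∈ t.filter (fun x => S ⊆ T x), c x = 0 := by
    intro S
    have key : ∑ x ∈ t, c x * ∏ j ∈ S, x j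
        = ∑ x ∈ t.filter (fun x => S ⊆ T x), c x := by
      rw [Finset.sum_filter]
      apply Finset.sum_congr rfl
      intro x hx
      rw [prod01 x hx S]
      by_cases h : S ⊆ T x <;> simp [h]
    rcases S.eq_empty_or_nonempty with rfl | hne
    · rw [← key]; simpa using h0
    · rw [← key]; exact hS S hne
  have hxT : ∀ x ∈ t, ∀ j, x j = if j ∈ T x then 1 else 0 := by
    intro x hx j
    rcases h01 x hx j with h1 | h1 <;> simp [hT, h1]
  have Tinj : ∀ x ∈ t, ∀ y ∈ t, T x = T y → x = y := by
    intro x hx y hy hTxy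
    funext j
    rw [hxT x hx j, hxT y hy j, hTxy]
  have key : ∀ k, ∀ x0 ∈ t, n - (T x0).card ≤ k → c x0 = 0 := by
    intro k
    induction k using Nat.strong_induction_on with
    | _ k ih =>
      intro x0 hx0 hk
      have hx0f : x0 ∈ t.filter (fun x => T x0 ⊆ T x) := by
        simp [Finset.mem_filter, hx0]
      have hsplit := Finset.add_sum_erase _ c hx0f
      rw [hFilt (T x0)] at hsplit
      have hrest : ∀ x ∈ (t.filter (fun x => T x0 ⊆ T x)).erase x0, c x = 0 := by
        intro x hx
        obtain ⟨hne, hxf⟩ := Finset.mem_erase.mp hx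
        obtain ⟨hxt, hsub⟩ := Finset.mem_filter.mp hxf
        have hneT : T x0 ≠ T x := fun h => hne (Tinj x hxt x0 hx0 h.symm)
        have hcard : (T x0).card < (T x).card :=
          Finset.card_lt_card (lt_of_le_of_ne hsub hneT)
        have hle : (T x).card ≤ n := by
          simpa using (T x).card_le_univ
        exact ih (n - (T x).card) (by omega) x hxt le_rfl
      rw [Finset.sum_eq_zero hrest] at hsplit
      linarith
  intro x hx
  exact key n x hx (Nat.sub_le _ _)

private lemma exists_weights {E F : Type*} [AddCommGroup E] [Module ℝ E]
    [AddCommGroup F] [Module ℝ F]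
    (t : Finset E) (f : E → F)
    (hf : ∀ x ∈ t, ∀ y ∈ t, f x = f y → x = y)
    (p : F) (hp : p ∈ convexHull ℝ (f '' ↑t)) :
    ∃ w : E → ℝ, (∀ x ∈ t, 0 ≤ w x) ∧ ∑ x ∈ t, w x = 1 ∧ ∑ x ∈ t, w x • f x = p := by
  classical
  rw [← Finset.coe_image, Finset.convexHull_eq] at hp
  obtain ⟨W, hW0, hW1, hWc⟩ := hp
  refine ⟨fun x => W (f x), fun x hx => hW0 _ (Finset.mem_image_of_mem f hx), ?_, ?_⟩
  · rw [← hW1, Finset.sum_image hf]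
  · rw [← hWc, Finset.centerMass_eq_of_sum_1 _ _ hW1, Finset.sum_image hf]
    rfl



/-- Theorem 3 (top level of the hierarchy): the simultaneous convex hull of several
linear fractional functions of 0-1 variables decomposes into the individual hulls
of the projections sharing the multilinear variables u. -/
theorem stmt13 (m n : ℕ) (hm : 1 ≤ m) (hn : 1 ≤ n)
    (X : Set (Fin n → ℝ)) (hXne : X.Nonempty)
    (hX01 : ∀ x ∈ X, ∀ j, x j = 0 ∨ x j = 1)
    (a0 : Fin m → ℝ) (a : Fin m → Fin n → ℝ)
    (hpos : ∀ i : Fin m, ∀ x ∈ X, 0 < a0 i + a i ⬝ᵥ x)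
    (Gn : Set ((Fin m → ℝ) × (Fin m → Fin n → ℝ) × ({S : Finset (Fin n) // S.Nonempty} → ℝ)))
    (hGn : Gn = {p | ∃ x ∈ X,
        (∀ i, p.1 i = (a0 i + a i ⬝ᵥ x)⁻¹) ∧
        (∀ i, p.2.1 i = (a0 i + a i ⬝ᵥ x)⁻¹ • x) ∧
        (∀ S : {S : Finset (Fin n) // S.Nonempty}, p.2.2 S = ∏ j ∈ S.val, x j)})
    (Gni : Fin m → Set (ℝ × (Fin n → ℝ) × ({S : Finset (Fin n) // S.Nonempty} → ℝ)))
    (hGni : ∀ i, Gni i =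
        (fun p : (Fin m → ℝ) × (Fin m → Fin n → ℝ) × ({S : Finset (Fin n) // S.Nonempty} → ℝ) =>
          (p.1 i, p.2.1 i, p.2.2)) '' Gn) :
    convexHull ℝ Gn
      = {p : (Fin m → ℝ) × (Fin m → Fin n → ℝ) × ({S : Finset (Fin n) // S.Nonempty} → ℝ) |
          ∀ i, (p.1 i, p.2.1 i, p.2.2) ∈ convexHull ℝ (Gni i)} := by
  classical
  -- X is finite
  have hXfin : X.Finite := by
    apply Set.Finite.subset (Set.Finite.pi (fun _ : Fin n => (Set.toFinite ({0, 1} : Set ℝ))))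
    intro x hx
    rw [Set.mem_pi]
    intro j _
    rcases hX01 x hx j with h | h <;> simp [h]
  set t : Finset (Fin n → ℝ) := hXfin.toFinset with ht
  have hXt : X = ↑t := (hXfin.coe_toFinset).symm
  -- the parametrizations
  set Φ : (Fin n → ℝ) → ((Fin m → ℝ) × (Fin m → Fin n → ℝ) × ({S : Finset (Fin n) // S.Nonempty} → ℝ)) :=
    fun x => (fun i => (a0 i + a i ⬝ᵥ x)⁻¹, fun i => (a0 i + a i ⬝ᵥ x)⁻¹ • x,
      fun S => ∏ j ∈ S.val, x j) with hΦ
  set Φi : Fin m → (Fin n → ℝ) → (ℝ × (Fin n → ℝ) × ({S : Finset (Fin n) // S.Nonempty} → ℝ)) :=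
    fun i x => ((a0 i + a i ⬝ᵥ x)⁻¹, (a0 i + a i ⬝ᵥ x)⁻¹ • x, fun S => ∏ j ∈ S.val, x j) with hΦi
  have hGnΦ : Gn = Φ '' X := by
    rw [hGn]
    ext p
    constructor
    · rintro ⟨x, hx, h1, h2, h3⟩
      exact ⟨x, hx, by
        apply Prod.ext
        · exact funext fun i => (h1 i).symm
        · apply Prod.ext
          · exact funext fun i => (h2 i).symm
          · exact funext fun S => (h3 S).symm⟩
    · rintro ⟨x, hx, rfl⟩
      exact ⟨x, hx, fun i => rfl, fun i => rfl, fun S => rfl⟩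
  have hGniΦ : ∀ i, Gni i = Φi i '' X := by
    intro i
    rw [hGni i, hGnΦ, Set.image_image]
  have hΦiinj : ∀ i, ∀ x ∈ t, ∀ y ∈ t, Φi i x = Φi i y → x = y := by
    intro i x _ y _ h
    have h3 : (Φi i x).2.2 = (Φi i y).2.2 := by rw [h]
    funext j
    have := congrFun h3 ⟨{j}, Finset.singleton_nonempty j⟩
    simpa [hΦi] using this
  ext p
  simp only [Set.mem_setOf_eq]
  constructor
  · -- easy direction
    intro hp i
    let Li : ((Fin m → ℝ) × (Fin m → Fin n → ℝ) × ({S : Finset (Fin n) // S.Nonempty} → ℝ)) →ₗ[ℝ]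
        (ℝ × (Fin n → ℝ) × ({S : Finset (Fin n) // S.Nonempty} → ℝ)) :=
      { toFun := fun q => (q.1 i, q.2.1 i, q.2.2)
        map_add' := fun q r => rfl
        map_smul' := fun c q => rfl }
    have h1 : Li p ∈ Li '' (convexHull ℝ Gn) := Set.mem_image_of_mem _ hp
    rw [Li.image_convexHull] at h1
    rw [hGni i]
    exact h1
  · -- hard direction
    intro hp
    have hw : ∀ i : Fin m, ∃ w : (Fin n → ℝ) → ℝ, (∀ x ∈ t, 0 ≤ w x) ∧ ∑ x ∈ t, w x = 1 ∧
        ∑ x ∈ t, w x • Φi i x = (p.1 i, p.2.1 i, p.2.2) := by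
      intro i
      apply exists_weights t (Φi i) (hΦiinj i)
      have := hp i
      rwa [hGniΦ i, hXt] at this
    choose w hw0 hw1 hwp using hw
    -- component equalities
    have hρ : ∀ i, ∑ x ∈ t, w i x * (a0 i + a i ⬝ᵥ x)⁻¹ = p.1 i := by
      intro i
      have := congrArg Prod.fst (hwp i)
      simpa [Prod.fst_sum, smul_eq_mul] using this
    have hy : ∀ i, ∑ x ∈ t, w i x • ((a0 i + a i ⬝ᵥ x)⁻¹ • x) = p.2.1 i := by
      intro i
      have := congrArg (fun q => q.2.1) (hwp i)
      simpa [Prod.snd_sum, Prod.fst_sum] using this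
    have hu : ∀ i, ∀ S : {S : Finset (Fin n) // S.Nonempty},
        ∑ x ∈ t, w i x * ∏ j ∈ S.val, x j = p.2.2 S := by
      intro i S
      have := congrFun (congrArg (fun q => q.2.2) (hwp i)) S
      simpa [Prod.snd_sum, Finset.sum_apply, smul_eq_mul] using this
    have h01t : ∀ x ∈ t, ∀ j, x j = 0 ∨ x j = 1 := by
      intro x hx j
      exact hX01 x (hXfin.mem_toFinset.mp hx) j
    set i0 : Fin m := ⟨0, hm⟩ with hi0
    -- all weight systems agree
    have hwe : ∀ i, ∀ x ∈ t, w i x = w i0 x := by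
      intro i x hx
      have := weights_unique t h01t (fun x => w i x - w i0 x)
        (by rw [Finset.sum_sub_distrib, hw1 i, hw1 i0]; ring)
        (by
          intro S hSne
          have : ∑ x ∈ t, (w i x - w i0 x) * ∏ j ∈ S, x j
              = (∑ x ∈ t, w i x * ∏ j ∈ S, x j) - ∑ x ∈ t, w i0 x * ∏ j ∈ S, x j := by
            rw [← Finset.sum_sub_distrib]
            exact Finset.sum_congr rfl fun x _ => by ring
          rw [this, hu i ⟨S, hSne⟩, hu i0 ⟨S, hSne⟩, sub_self])
        x hx
      simpa [sub_eq_zero] using this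
    -- p is the corresponding combination of points of Gn
    have hpeq : ∑ x ∈ t, w i0 x • Φ x = p := by
      apply Prod.ext
      · funext i
        rw [Prod.fst_sum, Finset.sum_apply, ← hρ i]
        exact Finset.sum_congr rfl fun x hx => by rw [hwe i x hx]; rfl
      · apply Prod.ext
        · funext i
          rw [Prod.snd_sum, Prod.fst_sum, Finset.sum_apply, ← hy i]
          exact Finset.sum_congr rfl fun x hx => by rw [hwe i x hx]; rfl
        · funext S
          rw [Prod.snd_sum, Prod.snd_sum, Finset.sum_apply, ← hu i0 S]
          rfl
    have hmemGn : ∀ x ∈ t, Φ x ∈ Gn := fun x hx => by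
      rw [hGnΦ]
      exact Set.mem_image_of_mem Φ (by rw [hXt]; exact hx)
    rw [← hpeq, ← Finset.centerMass_eq_of_sum_1 _ _ (hw1 i0)]
    exact t.centerMass_mem_convexHull (hw0 i0) (by rw [hw1 i0]; norm_num) hmemGn
end

section
/- Let n ≥ 1, a₀ ∈ ℝ, a, x, y ∈ ℝⁿ, ρ ∈ ℝ, and let W be a symmetric n×n real matrix. Suppose a₀ρ + aᵀy = 1 and x = a₀y + Wa. Then the (n+1)×(n+1) block matrix [[ρ, yᵀ],[y, W]] is positive semidefinite if and only if the (n+2)×(n+2) block matrix [[a₀ + aᵀx, 1, xᵀ],[1, ρ, yᵀ],[x, y, W]] is positive semidefinite. -/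
open Matrix

/-- Proposition 8: under the linking equalities, the (n+1)×(n+1) moment matrix is
positive semidefinite iff the augmented (n+2)×(n+2) matrix is. -/
theorem stmt14 (n : ℕ) (hn : 1 ≤ n) (a₀ ρ : ℝ) (a x y : Fin n → ℝ)
    (W : Matrix (Fin n) (Fin n) ℝ) (hW : W.IsSymm)
    (h1 : a₀ * ρ + a ⬝ᵥ y = 1)
    (h2 : x = a₀ • y + W.mulVec a) :
    (Matrix.fromBlocks (Matrix.of fun _ _ : Fin 1 => ρ)
        (Matrix.of fun (_ : Fin 1) (j : Fin n) => y j)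
        (Matrix.of fun (i : Fin n) (_ : Fin 1) => y i) W).PosSemidef ↔
    (Matrix.fromBlocks (Matrix.of fun _ _ : Fin 1 => a₀ + a ⬝ᵥ x)
        (Matrix.of fun (_ : Fin 1) (j : Fin 1 ⊕ Fin n) =>
          Sum.elim (fun _ : Fin 1 => (1 : ℝ)) x j)
        (Matrix.of fun (i : Fin 1 ⊕ Fin n) (_ : Fin 1) =>
          Sum.elim (fun _ : Fin 1 => (1 : ℝ)) x i)
        (Matrix.fromBlocks (Matrix.of fun _ _ : Fin 1 => ρ)
          (Matrix.of fun (_ : Fin 1) (j : Fin n) => y j)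
          (Matrix.of fun (i : Fin n) (_ : Fin 1) => y i) W)).PosSemidef := by
  set M : Matrix (Fin 1 ⊕ Fin n) (Fin 1 ⊕ Fin n) ℝ :=
    Matrix.fromBlocks (Matrix.of fun _ _ : Fin 1 => ρ)
      (Matrix.of fun (_ : Fin 1) (j : Fin n) => y j)
      (Matrix.of fun (i : Fin n) (_ : Fin 1) => y i) W with hM
  set u : Fin 1 ⊕ Fin n → ℝ := Sum.elim (fun _ => a₀) a with hu
  set c : Fin 1 ⊕ Fin n → ℝ := Sum.elim (fun _ => (1:ℝ)) x with hc
  have hMsymm : Mᵀ = M := by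
    ext i j
    cases i <;> cases j <;>
      simp [hM, Matrix.fromBlocks, hW.apply]
  have hkey : M *ᵥ u = c := by
    rw [hM, hu, Matrix.fromBlocks_mulVec]
    funext i
    cases i with
    | inl i =>
      simpa [hc, Matrix.mulVec, dotProduct, mul_comm] using h1
    | inr i =>
      simp [hc, h2, Matrix.mulVec, dotProduct, mul_comm]
  constructor
  · intro hMps
    rw [posSemidef_iff_dotProduct_mulVec]
    constructor
    · show _ᴴ = _
      rw [conjTranspose_eq_transpose_of_trivial]
      ext i j
      cases i <;> cases j <;>
        simp only [Matrix.transpose_apply, Matrix.fromBlocks_apply₁₁,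
          Matrix.fromBlocks_apply₁₂, Matrix.fromBlocks_apply₂₁, Matrix.fromBlocks_apply₂₂,
          Matrix.of_apply]
      · exact congrFun (congrFun hMsymm _) _
    · intro v
      have hv : v = Sum.elim (fun _ => v (Sum.inl 0)) (fun j => v (Sum.inr j)) := by
        funext i
        cases i with
        | inl i => simp [Subsingleton.elim i 0]
        | inr i => simp
      set t : ℝ := v (Sum.inl 0) with ht
      set vr : Fin 1 ⊕ Fin n → ℝ := fun j => v (Sum.inr j) with hvr
      have e1 : u ⬝ᵥ (M *ᵥ vr) = c ⬝ᵥ vr := by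
        rw [Matrix.dotProduct_mulVec, ← Matrix.mulVec_transpose, hMsymm, hkey]
      have e2 : u ⬝ᵥ c = a₀ + a ⬝ᵥ x := by
        simp [hu, hc, dotProduct]
      have goal_eq : star v ⬝ᵥ (Matrix.fromBlocks (Matrix.of fun _ _ : Fin 1 => a₀ + a ⬝ᵥ x)
          (Matrix.of fun (_ : Fin 1) (j : Fin 1 ⊕ Fin n) => c j)
          (Matrix.of fun (i : Fin 1 ⊕ Fin n) (_ : Fin 1) => c i) M *ᵥ v)
          = star (vr + t • u) ⬝ᵥ (M *ᵥ (vr + t • u)) := by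
        rw [show (star v : Fin 1 ⊕ (Fin 1 ⊕ Fin n) → ℝ) = v from rfl,
          show (star (vr + t • u) : Fin 1 ⊕ Fin n → ℝ) = vr + t • u from rfl]
        conv_lhs => rw [hv]
        rw [Matrix.fromBlocks_mulVec]
        simp only [Sum.elim_comp_inl, Sum.elim_comp_inr]
        rw [sumElim_dotProduct_sumElim]
        have hdA : (fun _ : Fin 1 => t) ⬝ᵥ ((Matrix.of fun _ _ : Fin 1 => a₀ + a ⬝ᵥ x) *ᵥ fun _ => t)
            = t * ((a₀ + a ⬝ᵥ x) * t) := by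
          simp [Matrix.mulVec, dotProduct]
        have hdB : (fun _ : Fin 1 => t) ⬝ᵥ ((Matrix.of fun (_ : Fin 1) (j : Fin 1 ⊕ Fin n) => c j) *ᵥ vr)
            = t * (c ⬝ᵥ vr) := by
          simp [Matrix.mulVec, dotProduct]
        have hdC : vr ⬝ᵥ ((Matrix.of fun (i : Fin 1 ⊕ Fin n) (_ : Fin 1) => c i) *ᵥ fun _ => t)
            = t * (c ⬝ᵥ vr) := by
          simp only [Matrix.mulVec, dotProduct, Matrix.of_apply, Fin.sum_univ_one,
            Finset.mul_sum]
          exact Finset.sum_congr rfl fun i _ => by ring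
        have e3 : vr ⬝ᵥ c = c ⬝ᵥ vr := dotProduct_comm _ _
        simp only [Matrix.mulVec_add, Matrix.mulVec_smul, hkey, dotProduct_add,
          dotProduct_smul, add_dotProduct, smul_dotProduct, smul_eq_mul,
          hdA, hdB, hdC, e1, e2, e3]
        ring
      rw [goal_eq]
      exact hMps.dotProduct_mulVec_nonneg _
  · intro hN
    have hsub := hN.submatrix Sum.inr
    have : (Matrix.fromBlocks (Matrix.of fun _ _ : Fin 1 => a₀ + a ⬝ᵥ x)
        (Matrix.of fun (_ : Fin 1) (j : Fin 1 ⊕ Fin n) => Sum.elim (fun _ : Fin 1 => (1:ℝ)) x j)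
        (Matrix.of fun (i : Fin 1 ⊕ Fin n) (_ : Fin 1) => Sum.elim (fun _ : Fin 1 => (1:ℝ)) x i)
        M).submatrix Sum.inr Sum.inr = M := by
      ext i j; simp [Matrix.submatrix]
    rwa [this] at hsub
end

section
/- Let C ∈ ℝ^{r×n}, d ∈ ℝʳ, α, β ∈ ℝⁿ and ᾱ, β̄ ∈ ℝ. Suppose there exist ω, ν ∈ ℝʳ with ω ≥ 0, ν ≥ 0, Cᵀω = α, dᵀω ≤ ᾱ, Cᵀν = β, and dᵀν ≤ β̄. Let ρ ∈ ℝ with ρ ≥ 0, y ∈ ℝⁿ, and let W be an n×n real matrix such that the matrix C W Cᵀ − d yᵀ Cᵀ − C y dᵀ + ρ d dᵀ is entrywise nonnegative and C y ≤ ρ d (componentwise). Then βᵀWα − ᾱ βᵀy − β̄ αᵀy + ρ ᾱ β̄ ≥ 0. -/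
open Matrix

/-- Homogenized product inequality (key step in the proof of Proposition 5). -/
theorem stmt15 (r n : ℕ) (C : Matrix (Fin r) (Fin n) ℝ) (d : Fin r → ℝ)
    (α β : Fin n → ℝ) (αbar βbar : ℝ)
    (hω : ∃ ω : Fin r → ℝ, (∀ i, 0 ≤ ω i) ∧ Cᵀ.mulVec ω = α ∧ d ⬝ᵥ ω ≤ αbar)
    (hν : ∃ ν : Fin r → ℝ, (∀ i, 0 ≤ ν i) ∧ Cᵀ.mulVec ν = β ∧ d ⬝ᵥ ν ≤ βbar)
    (ρ : ℝ) (hρ : 0 ≤ ρ) (y : Fin n → ℝ) (W : Matrix (Fin n) (Fin n) ℝ)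
    (hMat : ∀ i j, 0 ≤ (C * W * Cᵀ - Matrix.vecMulVec d (C.mulVec y)
        - Matrix.vecMulVec (C.mulVec y) d + ρ • Matrix.vecMulVec d d) i j)
    (hCy : ∀ i, C.mulVec y i ≤ ρ * d i) :
    0 ≤ β ⬝ᵥ W.mulVec α - αbar * (β ⬝ᵥ y) - βbar * (α ⬝ᵥ y) + ρ * αbar * βbar := by
  obtain ⟨ω, hω0, hωC, hωd⟩ := hω
  obtain ⟨ν, hν0, hνC, hνd⟩ := hν
  set M : Matrix (Fin r) (Fin r) ℝ := C * W * Cᵀ - Matrix.vecMulVec d (C.mulVec y)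
        - Matrix.vecMulVec (C.mulVec y) d + ρ • Matrix.vecMulVec d d with hM
  have key : 0 ≤ ν ⬝ᵥ M.mulVec ω := by
    simp only [dotProduct, Matrix.mulVec]
    apply Finset.sum_nonneg
    intro i _
    apply mul_nonneg (hν0 i)
    apply Finset.sum_nonneg
    intro j _
    exact mul_nonneg (hMat i j) (hω0 j)
  -- expand the quadratic form
  have e1 : ν ⬝ᵥ (C * W * Cᵀ).mulVec ω = β ⬝ᵥ W.mulVec α := by
    rw [← Matrix.mulVec_mulVec, ← Matrix.mulVec_mulVec, dotProduct_mulVec, hωC,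
      ← mulVec_transpose, hνC]
  have e2 : ∀ u v : Fin r → ℝ, ν ⬝ᵥ (Matrix.vecMulVec u v).mulVec ω
      = (ν ⬝ᵥ u) * (v ⬝ᵥ ω) := by
    intro u v
    simp only [Matrix.vecMulVec, Matrix.mulVec, dotProduct, Matrix.of_apply,
      Finset.mul_sum, Finset.sum_mul]
    rw [Finset.sum_comm]
    apply Finset.sum_congr rfl; intro j _
    apply Finset.sum_congr rfl; intro i _
    ring
  have eα : (C.mulVec y) ⬝ᵥ ω = α ⬝ᵥ y := by
    rw [dotProduct_comm, dotProduct_mulVec, ← mulVec_transpose, hωC]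
  have eβ : (C.mulVec y) ⬝ᵥ ν = β ⬝ᵥ y := by
    rw [dotProduct_comm, dotProduct_mulVec, ← mulVec_transpose, hνC]
  have keyeq : ν ⬝ᵥ M.mulVec ω
      = β ⬝ᵥ W.mulVec α - (ν ⬝ᵥ d) * (α ⬝ᵥ y) - (β ⬝ᵥ y) * (d ⬝ᵥ ω)
        + ρ * ((ν ⬝ᵥ d) * (d ⬝ᵥ ω)) := by
    rw [hM, Matrix.add_mulVec, Matrix.sub_mulVec, Matrix.sub_mulVec, dotProduct_add,
      dotProduct_sub, dotProduct_sub, e1, e2, e2, Matrix.smul_mulVec,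
      dotProduct_smul, e2]
    have h1 : (C.mulVec y) ⬝ᵥ ω = α ⬝ᵥ y := eα
    have h2 : ν ⬝ᵥ (C.mulVec y) = β ⬝ᵥ y := by rw [dotProduct_comm]; exact eβ
    rw [h1, h2, smul_eq_mul]
  -- scalar inequalities
  have hp : α ⬝ᵥ y ≤ ρ * (d ⬝ᵥ ω) := by
    rw [← eα]
    simp only [dotProduct, Finset.mul_sum]
    apply Finset.sum_le_sum
    intro i _
    calc C.mulVec y i * ω i ≤ (ρ * d i) * ω i :=
          mul_le_mul_of_nonneg_right (hCy i) (hω0 i)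
      _ = ρ * (d i * ω i) := by ring
  have hq : β ⬝ᵥ y ≤ ρ * (d ⬝ᵥ ν) := by
    rw [← eβ]
    simp only [dotProduct, Finset.mul_sum]
    apply Finset.sum_le_sum
    intro i _
    calc C.mulVec y i * ν i ≤ (ρ * d i) * ν i :=
          mul_le_mul_of_nonneg_right (hCy i) (hν0 i)
      _ = ρ * (d i * ν i) := by ring
  have hdν : ν ⬝ᵥ d = d ⬝ᵥ ν := dotProduct_comm _ _
  rw [keyeq, hdν] at key
  set a := d ⬝ᵥ ω
  set b := d ⬝ᵥ ν
  set p := α ⬝ᵥ y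
  set q := β ⬝ᵥ y
  nlinarith [mul_nonneg (sub_nonneg.2 hωd) (sub_nonneg.2 hq),
    mul_nonneg (sub_nonneg.2 hνd) (sub_nonneg.2 hp),
    mul_nonneg hρ (mul_nonneg (sub_nonneg.2 hωd) (sub_nonneg.2 hνd))]
end

section
/- Fix m, n, p, r ∈ ℕ with 1 ≤ p ≤ n. Let C ∈ ℝ^{r×n}, d ∈ ℝʳ; for i ∈ {1,…,m} let a_{i0} ∈ ℝ and a_i ∈ ℝⁿ; let x_j(L), x_j(U) ∈ ℝ for j ∈ {1,…,n} and ρ^i(L), ρ^i(U) > 0 for i ∈ {1,…,m}. Suppose that for every j ∈ {1,…,n} the inequalities xⱼ ≤ x_j(U) and −xⱼ ≤ −x_j(L) are Farkas-implied by Cx ≤ d, and for every i ∈ {1,…,m} the inequalities a_iᵀx ≤ 1/ρ^i(L) − a_{i0} and −a_iᵀx ≤ a_{i0} − 1/ρ^i(U) are Farkas-implied by Cx ≤ d. Then R_QP ⊆ R_LEF. -/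
open Matrix

lemma dot_nonneg' {r : ℕ} (u v : Fin r → ℝ) (hu : ∀ k, 0 ≤ u k) (hv : ∀ k, 0 ≤ v k) :
    0 ≤ u ⬝ᵥ v :=
  Finset.sum_nonneg fun k _ => mul_nonneg (hu k) (hv k)

lemma vecMulVec_mulVec' {r s : ℕ} (a : Fin r → ℝ) (b : Fin s → ℝ) (c : Fin s → ℝ) :
    (Matrix.vecMulVec a b).mulVec c = (b ⬝ᵥ c) • a := by
  ext k
  simp only [Matrix.mulVec, Matrix.vecMulVec_apply, dotProduct, Pi.smul_apply, smul_eq_mul]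
  rw [Finset.sum_mul]
  exact Finset.sum_congr rfl fun l _ => by ring

lemma keyM {r n : ℕ} (C : Matrix (Fin r) (Fin n) ℝ) (d : Fin r → ℝ)
    (W : Matrix (Fin n) (Fin n) ℝ) (y : Fin n → ℝ) (ρ : ℝ)
    (hM : ∀ k l, 0 ≤ (C * W * Cᵀ - Matrix.vecMulVec d (C.mulVec y)
        - Matrix.vecMulVec (C.mulVec y) d + ρ • Matrix.vecMulVec d d) k l)
    (ω σ : Fin r → ℝ) (hω : ∀ k, 0 ≤ ω k) (hσ : ∀ k, 0 ≤ σ k) :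
    0 ≤ (Cᵀ.mulVec ω) ⬝ᵥ W.mulVec (Cᵀ.mulVec σ)
      - (d ⬝ᵥ ω) * (Cᵀ.mulVec σ ⬝ᵥ y) - (Cᵀ.mulVec ω ⬝ᵥ y) * (d ⬝ᵥ σ)
      + ρ * (d ⬝ᵥ ω) * (d ⬝ᵥ σ) := by
  set M := C * W * Cᵀ - Matrix.vecMulVec d (C.mulVec y)
      - Matrix.vecMulVec (C.mulVec y) d + ρ • Matrix.vecMulVec d d with hMdef
  have dm : ∀ (v : Fin r → ℝ) (z : Fin n → ℝ), v ⬝ᵥ C.mulVec z = Cᵀ.mulVec v ⬝ᵥ z := by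
    intro v z
    rw [Matrix.dotProduct_mulVec, Matrix.mulVec_transpose]
  have h0 : 0 ≤ ω ⬝ᵥ M.mulVec σ := by
    apply dot_nonneg' _ _ hω
    intro k
    simp only [Matrix.mulVec, dotProduct]
    exact Finset.sum_nonneg fun l _ => mul_nonneg (hM k l) (hσ l)
  have e3 : C.mulVec y ⬝ᵥ σ = Cᵀ.mulVec σ ⬝ᵥ y := by
    rw [dotProduct_comm, dm]
  have hexp : ω ⬝ᵥ M.mulVec σ = (Cᵀ.mulVec ω) ⬝ᵥ W.mulVec (Cᵀ.mulVec σ)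
      - (d ⬝ᵥ ω) * (Cᵀ.mulVec σ ⬝ᵥ y) - (Cᵀ.mulVec ω ⬝ᵥ y) * (d ⬝ᵥ σ)
      + ρ * (d ⬝ᵥ ω) * (d ⬝ᵥ σ) := by
    rw [hMdef, Matrix.add_mulVec, Matrix.sub_mulVec, Matrix.sub_mulVec,
      Matrix.smul_mulVec, vecMulVec_mulVec', vecMulVec_mulVec', vecMulVec_mulVec']
    have e1 : (C * W * Cᵀ).mulVec σ = C.mulVec (W.mulVec (Cᵀ.mulVec σ)) := by
      rw [← Matrix.mulVec_mulVec, ← Matrix.mulVec_mulVec]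
    rw [e1]
    simp only [dotProduct_add, dotProduct_sub, dotProduct_smul, smul_eq_mul, e3, dm]
    rw [dotProduct_comm ω d]
    ring
  linarith [h0, hexp.ge]

lemma key2 {r n : ℕ} (C : Matrix (Fin r) (Fin n) ℝ) (d : Fin r → ℝ)
    (y : Fin n → ℝ) (ρ : ℝ) (hCy : ∀ k, C.mulVec y k ≤ ρ * d k)
    (σ : Fin r → ℝ) (hσ : ∀ k, 0 ≤ σ k) :
    Cᵀ.mulVec σ ⬝ᵥ y ≤ ρ * (d ⬝ᵥ σ) := by
  have e3 : Cᵀ.mulVec σ ⬝ᵥ y = σ ⬝ᵥ C.mulVec y := by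
    rw [Matrix.dotProduct_mulVec, Matrix.mulVec_transpose, dotProduct_comm]
  rw [e3]
  have : σ ⬝ᵥ C.mulVec y ≤ σ ⬝ᵥ (ρ • d) := by
    apply Finset.sum_le_sum
    intro k _
    exact mul_le_mul_of_nonneg_left (hCy k) (hσ k)
  calc σ ⬝ᵥ C.mulVec y ≤ σ ⬝ᵥ (ρ • d) := this
    _ = ρ * (d ⬝ᵥ σ) := by rw [dotProduct_smul, smul_eq_mul, dotProduct_comm]

lemma chain (ρ dw ds b c u v w : ℝ) (hρ : 0 ≤ ρ)
    (h1 : 0 ≤ u - dw * v - w * ds + ρ * dw * ds)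
    (h2 : v ≤ ρ * ds) (h3 : w ≤ ρ * dw)
    (hb : dw ≤ b) (hc : ds ≤ c) : 0 ≤ u - b * v + c * (b * ρ - w) := by
  have e1 : 0 ≤ (b - dw) * (ρ * ds - v) := mul_nonneg (by linarith) (by linarith)
  have hw : w ≤ ρ * b := h3.trans (by nlinarith)
  have e2 : 0 ≤ (c - ds) * (b * ρ - w) := mul_nonneg (by linarith) (by linarith)
  nlinarith [e1, e2, h1]

/-- A linear inequality αᵀx ≤ b is Farkas-implied by the system Cx ≤ d. -/
def FarkasImplied {r n : ℕ} (C : Matrix (Fin r) (Fin n) ℝ) (d : Fin r → ℝ)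
    (α : Fin n → ℝ) (b : ℝ) : Prop :=
  ∃ ω : Fin r → ℝ, (∀ i, 0 ≤ ω i) ∧ Cᵀ.mulVec ω = α ∧ d ⬝ᵥ ω ≤ b

/-- Proposition 5: the relaxation R_QP is contained in the McCormick relaxation R_LEF. -/
theorem stmt16 (m n p r : ℕ) (hp : 1 ≤ p) (hpn : p ≤ n)
    (C : Matrix (Fin r) (Fin n) ℝ) (d : Fin r → ℝ)
    (a0 : Fin m → ℝ) (a : Fin m → Fin n → ℝ)
    (xL xU : Fin n → ℝ) (ρL ρU : Fin m → ℝ)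
    (hρL : ∀ i, 0 < ρL i) (hρU : ∀ i, 0 < ρU i)
    (hxU : ∀ j : Fin n, FarkasImplied C d (Pi.single j 1) (xU j))
    (hxL : ∀ j : Fin n, FarkasImplied C d (-(Pi.single j 1)) (-(xL j)))
    (haU : ∀ i : Fin m, FarkasImplied C d (a i) ((ρL i)⁻¹ - a0 i))
    (haL : ∀ i : Fin m, FarkasImplied C d (-(a i)) (a0 i - (ρU i)⁻¹)) :
    {pyx : (Fin m → ℝ) × (Fin m → Fin n → ℝ) × (Fin n → ℝ) |
      ∃ W : Fin m → Matrix (Fin n) (Fin n) ℝ,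
        (∀ i, (W i).IsSymm) ∧
        (∀ i, ∀ k l, 0 ≤ (C * W i * Cᵀ - Matrix.vecMulVec d (C.mulVec (pyx.2.1 i))
            - Matrix.vecMulVec (C.mulVec (pyx.2.1 i)) d
            + pyx.1 i • Matrix.vecMulVec d d) k l) ∧
        (∀ i, a0 i * pyx.1 i + a i ⬝ᵥ pyx.2.1 i = 1 ∧ 0 ≤ pyx.1 i) ∧
        (∀ i j, pyx.2.2 j = a0 i * pyx.2.1 i j + ∑ k, a i k * W i j k) ∧
        (∀ i k, C.mulVec (pyx.2.1 i) k ≤ pyx.1 i * d k) ∧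
        (∀ i, ∀ j : Fin n, (j : ℕ) < p → W i j j = pyx.2.1 i j) ∧
        (∀ k, C.mulVec pyx.2.2 k ≤ d k)}
    ⊆ {pyx : (Fin m → ℝ) × (Fin m → Fin n → ℝ) × (Fin n → ℝ) |
        (∀ k, C.mulVec pyx.2.2 k ≤ d k) ∧
        ∀ i, a0 i * pyx.1 i + a i ⬝ᵥ pyx.2.1 i = 1 ∧
          ∀ j, pyx.2.1 i j ≤ xU j * pyx.1 i + ρL i * pyx.2.2 j - xU j * ρL i ∧
               pyx.2.1 i j ≤ xL j * pyx.1 i + ρU i * pyx.2.2 j - xL j * ρU i ∧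
               pyx.2.1 i j ≥ xU j * pyx.1 i + ρU i * pyx.2.2 j - xU j * ρU i ∧
               pyx.2.1 i j ≥ xL j * pyx.1 i + ρL i * pyx.2.2 j - xL j * ρL i} := by
  rintro ⟨ρ, y, x⟩ ⟨W, hsym, hM, hb, hc, hd, he, hf⟩
  refine ⟨hf, fun i => ⟨(hb i).1, fun j => ?_⟩⟩
  obtain ⟨ωU, hωU, hαU, hbU⟩ := hxU j
  obtain ⟨ωL, hωL, hαL, hbL⟩ := hxL j
  obtain ⟨σU, hσU, hβU, hcU⟩ := haU i
  obtain ⟨σL, hσL, hβL, hcL⟩ := haL i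
  have hρ0 : 0 ≤ ρ i := (hb i).2
  -- basic evaluations
  have r1 : ((W i).mulVec (a i)) j = x j - a0 i * y i j := by
    have h1 : ((W i).mulVec (a i)) j = ∑ k, W i j k * a i k := by
      simp [Matrix.mulVec, dotProduct]
    have h2 : ∑ k, W i j k * a i k = ∑ k, a i k * W i j k :=
      Finset.sum_congr rfl fun k _ => mul_comm _ _
    have h3 := hc i j
    rw [h1, h2]; linarith
  have r3 : a i ⬝ᵥ y i = 1 - a0 i * ρ i := by
    have := (hb i).1; linarith
  -- key2 consequences
  have q2U : 1 - a0 i * ρ i ≤ ρ i * (d ⬝ᵥ σU) := by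
    have h := key2 C d (y i) (ρ i) (hd i) σU hσU
    rw [hβU, r3] at h; exact h
  have q2L : -(1 - a0 i * ρ i) ≤ ρ i * (d ⬝ᵥ σL) := by
    have h := key2 C d (y i) (ρ i) (hd i) σL hσL
    rw [hβL] at h
    simp only [neg_dotProduct] at h
    rw [r3] at h; exact h
  have q3U : y i j ≤ ρ i * (d ⬝ᵥ ωU) := by
    have h := key2 C d (y i) (ρ i) (hd i) ωU hωU
    rw [hαU] at h
    simpa [single_dotProduct] using h
  have q3L : -(y i j) ≤ ρ i * (d ⬝ᵥ ωL) := by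
    have h := key2 C d (y i) (ρ i) (hd i) ωL hωL
    rw [hαL] at h
    simpa [single_dotProduct] using h
  -- the four keyM inequalities, rewritten
  have mkK : ∀ (ω σ : Fin r → ℝ), (∀ k, 0 ≤ ω k) → (∀ k, 0 ≤ σ k) →
      0 ≤ (Cᵀ.mulVec ω) ⬝ᵥ (W i).mulVec (Cᵀ.mulVec σ)
        - (d ⬝ᵥ ω) * (Cᵀ.mulVec σ ⬝ᵥ y i) - (Cᵀ.mulVec ω ⬝ᵥ y i) * (d ⬝ᵥ σ)
        + ρ i * (d ⬝ᵥ ω) * (d ⬝ᵥ σ) := fun ω σ hω hσ =>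
    keyM C d (W i) (y i) (ρ i) (hM i) ω σ hω hσ
  have K1 : 0 ≤ (x j - a0 i * y i j) - (d ⬝ᵥ ωU) * (1 - a0 i * ρ i)
      - (y i j) * (d ⬝ᵥ σU) + ρ i * (d ⬝ᵥ ωU) * (d ⬝ᵥ σU) := by
    have K := mkK ωU σU hωU hσU
    rw [hαU, hβU] at K
    simp only [single_dotProduct, one_mul] at K
    rw [r1, r3] at K; exact K
  have K2 : 0 ≤ (x j - a0 i * y i j) - (d ⬝ᵥ ωL) * (-(1 - a0 i * ρ i))
      - (-(y i j)) * (d ⬝ᵥ σL) + ρ i * (d ⬝ᵥ ωL) * (d ⬝ᵥ σL) := by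
    have K := mkK ωL σL hωL hσL
    rw [hαL, hβL] at K
    simp only [Matrix.mulVec_neg, neg_dotProduct, dotProduct_neg, neg_neg,
      single_dotProduct, one_mul] at K
    rw [r1, r3] at K; linarith
  have K3 : 0 ≤ (-(x j - a0 i * y i j)) - (d ⬝ᵥ ωU) * (-(1 - a0 i * ρ i))
      - (y i j) * (d ⬝ᵥ σL) + ρ i * (d ⬝ᵥ ωU) * (d ⬝ᵥ σL) := by
    have K := mkK ωU σL hωU hσL
    rw [hαU, hβL] at K
    simp only [Matrix.mulVec_neg, neg_dotProduct, dotProduct_neg, neg_neg,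
      single_dotProduct, one_mul] at K
    rw [r1, r3] at K; linarith
  have K4 : 0 ≤ (-(x j - a0 i * y i j)) - (d ⬝ᵥ ωL) * (1 - a0 i * ρ i)
      - (-(y i j)) * (d ⬝ᵥ σU) + ρ i * (d ⬝ᵥ ωL) * (d ⬝ᵥ σU) := by
    have K := mkK ωL σU hωL hσU
    rw [hαL, hβU] at K
    simp only [Matrix.mulVec_neg, neg_dotProduct, dotProduct_neg, neg_neg,
      single_dotProduct, one_mul] at K
    rw [r1, r3] at K; linarith
  -- chain them
  have c1 := chain (ρ i) (d ⬝ᵥ ωU) (d ⬝ᵥ σU) (xU j) ((ρL i)⁻¹ - a0 i)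
      (x j - a0 i * y i j) (1 - a0 i * ρ i) (y i j) hρ0 K1 q2U q3U hbU hcU
  have c2 := chain (ρ i) (d ⬝ᵥ ωL) (d ⬝ᵥ σL) (-(xL j)) (a0 i - (ρU i)⁻¹)
      (x j - a0 i * y i j) (-(1 - a0 i * ρ i)) (-(y i j)) hρ0 K2 q2L q3L hbL hcL
  have c3 := chain (ρ i) (d ⬝ᵥ ωU) (d ⬝ᵥ σL) (xU j) (a0 i - (ρU i)⁻¹)
      (-(x j - a0 i * y i j)) (-(1 - a0 i * ρ i)) (y i j) hρ0 K3 q2L q3U hbU hcL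
  have c4 := chain (ρ i) (d ⬝ᵥ ωL) (d ⬝ᵥ σU) (-(xL j)) ((ρL i)⁻¹ - a0 i)
      (-(x j - a0 i * y i j)) (1 - a0 i * ρ i) (-(y i j)) hρ0 K4 q2U q3L hbL hcU
  have hLne : (ρL i : ℝ) ≠ 0 := ne_of_gt (hρL i)
  have hUne : (ρU i : ℝ) ≠ 0 := ne_of_gt (hρU i)
  refine ⟨?_, ?_, ?_, ?_⟩
  · -- y ≤ xU ρ + ρL x - xU ρL
    have h := mul_nonneg (hρL i).le c1
    have e : ρL i * ((x j - a0 i * y i j) - xU j * (1 - a0 i * ρ i)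
        + ((ρL i)⁻¹ - a0 i) * (xU j * ρ i - y i j))
        = ρL i * x j - ρL i * xU j + xU j * ρ i - y i j := by
      field_simp; ring
    rw [e] at h; linarith
  · -- y ≤ xL ρ + ρU x - xL ρU
    have h := mul_nonneg (hρU i).le c2
    have e : ρU i * ((x j - a0 i * y i j) - (-(xL j)) * (-(1 - a0 i * ρ i))
        + (a0 i - (ρU i)⁻¹) * ((-(xL j)) * ρ i - (-(y i j))))
        = ρU i * x j - ρU i * xL j - y i j + xL j * ρ i := by
      field_simp; ring
    rw [e] at h; linarith
  · -- y ≥ xU ρ + ρU x - xU ρU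
    have h := mul_nonneg (hρU i).le c3
    have e : ρU i * ((-(x j - a0 i * y i j)) - xU j * (-(1 - a0 i * ρ i))
        + (a0 i - (ρU i)⁻¹) * (xU j * ρ i - y i j))
        = -(ρU i * x j) + ρU i * xU j - xU j * ρ i + y i j := by
      field_simp; ring
    rw [e] at h; linarith
  · -- y ≥ xL ρ + ρL x - xL ρL
    have h := mul_nonneg (hρL i).le c4
    have e : ρL i * ((-(x j - a0 i * y i j)) - (-(xL j)) * (1 - a0 i * ρ i)
        + ((ρL i)⁻¹ - a0 i) * ((-(xL j)) * ρ i - (-(y i j))))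
        = -(ρL i * x j) + ρL i * xL j + y i j - xL j * ρ i := by
      field_simp; ring
    rw [e] at h; linarith
end

section
/- Let C ∈ ℝ^{r×n}, d ∈ ℝʳ, a₀, γ₀, γ̄, β̄ ∈ ℝ, and a, γ, β ∈ ℝⁿ. Suppose there exist ω ∈ ℝʳ with ω ≥ 0 and θ ∈ ℝ such that Cᵀω + θa = γ, −dᵀω + θa₀ = γ₀, and θ ≤ γ̄; and there exists ν ∈ ℝʳ with ν ≥ 0, Cᵀν = β, and dᵀν ≤ β̄. Let ρ ≥ 0, y, x ∈ ℝⁿ, and let W be a symmetric n×n real matrix such that: C W Cᵀ − d yᵀ Cᵀ − C y dᵀ + ρ d dᵀ is entrywise nonnegative; C y ≤ ρ d (componentwise); a₀ρ + aᵀy = 1; x = a₀y + Wa; and Cx ≤ d. Then γᵀWβ + γ₀ βᵀy − β̄ γᵀy − ρ γ₀ β̄ − γ̄ (βᵀx − β̄) ≥ 0. -/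
open Matrix

private lemma dot_trans {r n : ℕ} (C : Matrix (Fin r) (Fin n) ℝ) (w : Fin r → ℝ)
    (u : Fin n → ℝ) : Cᵀ.mulVec w ⬝ᵥ u = w ⬝ᵥ C.mulVec u := by
  rw [Matrix.mulVec_transpose, ← Matrix.dotProduct_mulVec]

private lemma vmv_mulVec {r : ℕ} (u v w : Fin r → ℝ) :
    (Matrix.vecMulVec u v).mulVec w = (v ⬝ᵥ w) • u := by
  funext i
  simp [Matrix.vecMulVec, Matrix.mulVec, dotProduct, Finset.sum_mul]
  exact Finset.sum_congr rfl fun j _ => by ring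

/-- Homogenized product inequality with a fractional-valued factor (key step in the
proof of Proposition 6). -/
theorem stmt17 (r n : ℕ) (C : Matrix (Fin r) (Fin n) ℝ) (d : Fin r → ℝ)
    (a0 γ0 γbar βbar : ℝ) (a γ β : Fin n → ℝ)
    (hω : ∃ (ω : Fin r → ℝ) (θ : ℝ), (∀ i, 0 ≤ ω i) ∧
        Cᵀ.mulVec ω + θ • a = γ ∧ -(d ⬝ᵥ ω) + θ * a0 = γ0 ∧ θ ≤ γbar)
    (hν : ∃ ν : Fin r → ℝ, (∀ i, 0 ≤ ν i) ∧ Cᵀ.mulVec ν = β ∧ d ⬝ᵥ ν ≤ βbar)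
    (ρ : ℝ) (hρ : 0 ≤ ρ) (y x : Fin n → ℝ)
    (W : Matrix (Fin n) (Fin n) ℝ) (hWsymm : W.IsSymm)
    (hMat : ∀ i j, 0 ≤ (C * W * Cᵀ - Matrix.vecMulVec d (C.mulVec y)
        - Matrix.vecMulVec (C.mulVec y) d + ρ • Matrix.vecMulVec d d) i j)
    (hCy : ∀ i, C.mulVec y i ≤ ρ * d i)
    (hnorm : a0 * ρ + a ⬝ᵥ y = 1)
    (hx : x = a0 • y + W.mulVec a)
    (hCx : ∀ i, C.mulVec x i ≤ d i) :
    0 ≤ γ ⬝ᵥ W.mulVec β + γ0 * (β ⬝ᵥ y) - βbar * (γ ⬝ᵥ y) - ρ * γ0 * βbar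
        - γbar * (β ⬝ᵥ x - βbar) := by
  obtain ⟨ω, θ, hω0, hγ, hγ0, hθ⟩ := hω
  obtain ⟨ν, hν0, hβ, hνd⟩ := hν
  -- scalar abbreviations
  set s1 : ℝ := ω ⬝ᵥ (C * W * Cᵀ).mulVec ν with hs1
  set s2 : ℝ := d ⬝ᵥ ω with hs2
  set s3 : ℝ := d ⬝ᵥ ν with hs3
  set s4 : ℝ := ω ⬝ᵥ C.mulVec y with hs4
  set s5 : ℝ := ν ⬝ᵥ C.mulVec y with hs5
  set s6 : ℝ := a ⬝ᵥ W.mulVec β with hs6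
  set ay : ℝ := a ⬝ᵥ y with hay
  -- nonnegativity of the quadratic form
  have hQ : (0:ℝ) ≤ ω ⬝ᵥ (C * W * Cᵀ - Matrix.vecMulVec d (C.mulVec y)
      - Matrix.vecMulVec (C.mulVec y) d + ρ • Matrix.vecMulVec d d).mulVec ν := by
    simp only [Matrix.mulVec, dotProduct]
    refine Finset.sum_nonneg fun i _ => mul_nonneg (hω0 i) ?_
    exact Finset.sum_nonneg fun j _ => mul_nonneg (hMat i j) (hν0 j)
  have hexp : ω ⬝ᵥ (C * W * Cᵀ - Matrix.vecMulVec d (C.mulVec y)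
      - Matrix.vecMulVec (C.mulVec y) d + ρ • Matrix.vecMulVec d d).mulVec ν
      = s1 - s2 * s5 - s4 * s3 + ρ * (s2 * s3) := by
    rw [Matrix.add_mulVec, Matrix.sub_mulVec, Matrix.sub_mulVec,
      Matrix.smul_mulVec, vmv_mulVec, vmv_mulVec, vmv_mulVec,
      dotProduct_add, dotProduct_sub, dotProduct_sub, dotProduct_smul,
      dotProduct_smul, dotProduct_smul, dotProduct_smul]
    have e1 : C.mulVec y ⬝ᵥ ν = s5 := dotProduct_comm _ _
    have e2 : ω ⬝ᵥ d = s2 := dotProduct_comm _ _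
    have e3 : ω ⬝ᵥ C.mulVec y = s4 := rfl
    rw [e1, e2, e3]
    simp only [smul_eq_mul]
    ring
  have hQ' : (0:ℝ) ≤ s1 - s2 * s5 - s4 * s3 + ρ * (s2 * s3) := hexp ▸ hQ
  -- ω ⬝ (Cy) ≤ ρ (d⬝ω)
  have h2 : s4 ≤ ρ * s2 := by
    have h := Finset.sum_le_sum (fun i (_ : i ∈ Finset.univ) =>
      mul_le_mul_of_nonneg_left (hCy i) (hω0 i))
    calc s4 ≤ ∑ i, ω i * (ρ * d i) := h
      _ = ρ * s2 := by
        rw [hs2, dotProduct, Finset.mul_sum]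
        exact Finset.sum_congr rfl fun i _ => by ring
  -- β ⬝ x ≤ s3
  have hβx : β ⬝ᵥ x ≤ s3 := by
    have e : β ⬝ᵥ x = ν ⬝ᵥ C.mulVec x := by rw [← hβ, dot_trans]
    rw [e, hs3, dotProduct_comm d ν]
    exact Finset.sum_le_sum fun i _ => mul_le_mul_of_nonneg_left (hCx i) (hν0 i)
  -- express the goal terms in scalars
  have t1 : γ ⬝ᵥ W.mulVec β = s1 + θ * s6 := by
    rw [← hγ, add_dotProduct, smul_dotProduct, smul_eq_mul, ← hβ, dot_trans,
      Matrix.mulVec_mulVec, Matrix.mulVec_mulVec, hβ, hs1, hs6]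
  have t2 : β ⬝ᵥ y = s5 := by rw [← hβ, dot_trans, hs5]
  have t3 : γ ⬝ᵥ y = s4 + θ * ay := by
    rw [← hγ, add_dotProduct, smul_dotProduct, smul_eq_mul, dot_trans, hs4, hay]
  have t4 : β ⬝ᵥ x = a0 * s5 + s6 := by
    rw [hx, dotProduct_add, dotProduct_smul, smul_eq_mul, t2]
    congr 1
    -- β ⬝ᵥ W *ᵥ a = a ⬝ᵥ W *ᵥ β  using symmetry of W
    rw [hs6, Matrix.dotProduct_mulVec]
    nth_rewrite 1 [← hWsymm.eq]
    rw [Matrix.vecMul_transpose, dotProduct_comm]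
  rw [t1, t2, t3, t4, ← hγ0]
  have hnorm' : a0 * ρ + ay = 1 := hnorm
  have ht : a0 * s5 + s6 ≤ s3 := t4 ▸ hβx
  have hP1 : 0 ≤ (βbar - s3) * (ρ * s2 - s4) := mul_nonneg (by linarith) (by linarith)
  have hP2 : 0 ≤ (γbar - θ) * (βbar - (a0 * s5 + s6)) :=
    mul_nonneg (by linarith) (by linarith)
  have hnorm2 : θ * βbar * (a0 * ρ + ay) = θ * βbar := by rw [hnorm']; ring
  nlinarith [hQ', hP1, hP2, hnorm2]
end

section
/- Let n ≥ 1, let w ∈ ℕⁿ and K ∈ ℕ, and set a = w, β = −(2K+1)·w, γ = w. Then for every x ∈ {0,1}ⁿ one has βᵀx + (γᵀx)(1 + aᵀx) = (wᵀx − K)² − K²; consequently, the minimum of βᵀx + (γᵀx)(1 + aᵀx) over x ∈ {0,1}ⁿ equals −K² if and only if there exists x ∈ {0,1}ⁿ with wᵀx = K. -/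
open Matrix

/-- Example 3 (subset-sum reduction): the quadratic objective equals
(wᵀx − K)² − K² on {0,1}ⁿ, and its minimum is −K² iff some 0-1 point satisfies
wᵀx = K. -/
theorem stmt19 (n : ℕ) (hn : 1 ≤ n) (w : Fin n → ℕ) (K : ℕ)
    (a β γ : Fin n → ℝ)
    (ha : a = fun j => (w j : ℝ))
    (hβ : β = fun j => -(2 * (K : ℝ) + 1) * (w j : ℝ))
    (hγ : γ = fun j => (w j : ℝ)) :
    (∀ x : Fin n → ℝ, (∀ j, x j = 0 ∨ x j = 1) →
      β ⬝ᵥ x + (γ ⬝ᵥ x) * (1 + a ⬝ᵥ x)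
        = ((fun j => (w j : ℝ)) ⬝ᵥ x - (K : ℝ)) ^ 2 - (K : ℝ) ^ 2) ∧
    (IsLeast {v : ℝ | ∃ x : Fin n → ℝ, (∀ j, x j = 0 ∨ x j = 1) ∧
        v = β ⬝ᵥ x + (γ ⬝ᵥ x) * (1 + a ⬝ᵥ x)} (-(K : ℝ) ^ 2) ↔
      ∃ x : Fin n → ℝ, (∀ j, x j = 0 ∨ x j = 1) ∧
        (fun j => (w j : ℝ)) ⬝ᵥ x = (K : ℝ)) := by
  have key : ∀ x : Fin n → ℝ,
      β ⬝ᵥ x + (γ ⬝ᵥ x) * (1 + a ⬝ᵥ x)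
        = ((fun j => (w j : ℝ)) ⬝ᵥ x - (K : ℝ)) ^ 2 - (K : ℝ) ^ 2 := by
    intro x
    have hb : β ⬝ᵥ x = -(2 * (K : ℝ) + 1) * ((fun j => (w j : ℝ)) ⬝ᵥ x) := by
      subst hβ
      simp [dotProduct, Finset.mul_sum, mul_assoc]
    subst ha hγ
    rw [hb]
    ring
  refine ⟨fun x _ => key x, ?_⟩
  constructor
  · rintro ⟨⟨x, hx, hv⟩, hlb⟩
    rw [key x] at hv
    refine ⟨x, hx, ?_⟩
    have : ((fun j => (w j : ℝ)) ⬝ᵥ x - (K : ℝ)) ^ 2 = 0 := by linarith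
    have := pow_eq_zero_iff (n := 2) (by norm_num) |>.mp this
    linarith
  · rintro ⟨x, hx, hs⟩
    constructor
    · exact ⟨x, hx, by rw [key x, hs]; ring⟩
    · rintro v ⟨y, hy, rfl⟩
      rw [key y]
      nlinarith [sq_nonneg ((fun j => (w j : ℝ)) ⬝ᵥ y - (K : ℝ))]
end
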